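/- arXiv:quant-ph/0608154 — 5 statements merged into one kernel-verified Lean document; each statement's English description precedes it below -/
import Mathlib

section
/- The inhomogeneous Markov chain of path-integral Monte Carlo quantum annealing is strongly ergodic if the annealing schedule satisfies T1(t) ≥ R·L1 / log(t+2) for all t ≥ 0, and the limiting distribution r is supported on the set S1^min of global minima of F1, with r(x) = exp(−F0(x)/T0) / Σ_{y∈S1^min} exp(−F0(y)/T0) for x ∈ S1^min and r(x) = 0 otherwise. -/
/-!
The Boltzmann distribution `q(t)` is stationary for `G(t)` by detailed balance, it converges to
`rLimit` as `T1 → 0`, and each coordinate `t ↦ q(x;t)` is eventually monotone, so the drift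
`∑ₜ ‖q(t+1) - q(t)‖` is finite. Strong ergodicity then follows from weak ergodicity. For the
latter, pick a state `x0` that is not a local maximum of `F1` and realises `R`: within any block of
`R` steps every state reaches `x0` with probability at least `c^R exp (-R L1 / T1) ≥ c^R / (t + 2)`
under the logarithmic schedule. This Doeblin minorization contracts `ℓ¹` distances of mean-zero
vectors by `1 - c^R / (t + 2)` per block, and these factors multiply to zero since the harmonic
series diverges.
-/

open Finset Filter

namespace QAPaper

variable {S : Type*}

/-- A probability distribution on the finite state space `S`, viewed as a vector. -/
def IsProbVec [Fintype S] (p : S → ℝ) : Prop :=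
  (∀ x, 0 ≤ p x) ∧ ∑ x, p x = 1

/-- The ℓ¹ norm distance `‖p - p'‖ = ∑ₓ |p(x) - p'(x)|`. -/
noncomputable def dist1 [Fintype S] (p p' : S → ℝ) : ℝ := ∑ x, |p x - p' x|

/-- A column-stochastic matrix: entries nonnegative, columns sum to one. -/
def IsStochastic [Fintype S] (G : Matrix S S ℝ) : Prop :=
  (∀ y x, 0 ≤ G y x) ∧ ∀ x, ∑ y, G y x = 1

/-- `prodG G t t0 = G (t-1) * G (t-2) * ⋯ * G t0`. -/
noncomputable def prodG [Fintype S] [DecidableEq S] (G : ℕ → Matrix S S ℝ) (t t0 : ℕ) :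
    Matrix S S ℝ :=
  (((List.range (t - t0)).map fun k => G (t0 + k)).reverse).prod

/-- Weak ergodicity: the distribution forgets its initial condition. -/
def WeaklyErgodic [Fintype S] [DecidableEq S] (G : ℕ → Matrix S S ℝ) : Prop :=
  ∀ t0 : ℕ, ∀ ε > (0 : ℝ), ∃ T : ℕ, ∀ t ≥ T,
    ∀ p0 p0' : S → ℝ, IsProbVec p0 → IsProbVec p0' →
      dist1 ((prodG G t t0).mulVec p0) ((prodG G t t0).mulVec p0') ≤ ε

/-- Strong ergodicity towards a fixed distribution `r`. -/
def StronglyErgodicTo [Fintype S] [DecidableEq S] (G : ℕ → Matrix S S ℝ) (r : S → ℝ) : Prop :=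
  ∀ t0 : ℕ, ∀ ε > (0 : ℝ), ∃ T : ℕ, ∀ t ≥ T,
    ∀ p0 : S → ℝ, IsProbVec p0 → dist1 ((prodG G t t0).mulVec p0) r ≤ ε

/-- Strong ergodicity. -/
def StronglyErgodic [Fintype S] [DecidableEq S] (G : ℕ → Matrix S S ℝ) : Prop :=
  ∃ r : S → ℝ, IsProbVec r ∧ StronglyErgodicTo G r

/-- The coefficient of ergodicity `α(G)`. -/
noncomputable def ergCoeff [Fintype S] [Nonempty S] (G : Matrix S S ℝ) : ℝ :=
  1 - Finset.univ.inf' Finset.univ_nonempty fun p : S × S => ∑ z, min (G z p.1) (G z p.2)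

/-- A generation probability: symmetric, vanishing on the diagonal, columns summing
to one, and irreducible. -/
structure IsGenProb [Fintype S] (P : S → S → ℝ) : Prop where
  symm : ∀ x y, P y x = P x y
  nonneg : ∀ x y, 0 ≤ P y x
  diag_zero : ∀ x, P x x = 0
  sum_one : ∀ x, ∑ y, P y x = 1
  irreducible : ∀ x y : S, ∃ n > 0, ∃ z : ℕ → S,
    z 0 = x ∧ z n = y ∧ ∀ k < n, 0 < P (z (k + 1)) (z k)

/-- An acceptance function: monotone increasing, valued in `[0,1]`,
with `g (1/u) = g u / u`. -/
structure IsAcceptFn (g : ℝ → ℝ) : Prop where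
  mono : MonotoneOn g (Set.Ici (0 : ℝ))
  maps : ∀ u : ℝ, 0 ≤ u → g u ∈ Set.Icc (0 : ℝ) 1
  ratio : ∀ u : ℝ, 0 < u → g (1 / u) = g u / u

/-- Partition function `Z(t)`. -/
noncomputable def Zfun [Fintype S] (F0 F1 : S → ℝ) (T0 : ℝ) (T1 : ℕ → ℝ) (t : ℕ) : ℝ :=
  ∑ x, Real.exp (-(F0 x) / T0 - F1 x / T1 t)

/-- Time-dependent Boltzmann distribution `q(x;t)`. -/
noncomputable def qB [Fintype S] (F0 F1 : S → ℝ) (T0 : ℝ) (T1 : ℕ → ℝ) (t : ℕ) (x : S) : ℝ :=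
  Real.exp (-(F0 x) / T0 - F1 x / T1 t) / Zfun F0 F1 T0 T1 t

/-- Transition matrix built from a generation probability `P` and an
acceptance probability `A`. -/
noncomputable def GmatOf [Fintype S] [DecidableEq S] (P : S → S → ℝ) (A : ℕ → S → S → ℝ)
    (t : ℕ) : Matrix S S ℝ :=
  Matrix.of fun y x => if y = x then 1 - ∑ z, P z x * A t z x else P y x * A t y x

/-- Transition matrix of path-integral Monte Carlo quantum annealing. -/
noncomputable def Gpimc [Fintype S] [DecidableEq S] (P : S → S → ℝ) (g : ℝ → ℝ)
    (F0 F1 : S → ℝ) (T0 : ℝ) (T1 : ℕ → ℝ) : ℕ → Matrix S S ℝ :=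
  GmatOf P fun t y x => g (qB F0 F1 T0 T1 t y / qB F0 F1 T0 T1 t x)

/-- The set `S_m` of local maxima of `F1` with respect to `P`. -/
def Sm [Fintype S] (P : S → S → ℝ) (F1 : S → ℝ) : Set S :=
  {x | ∀ y, 0 < P y x → F1 y ≤ F1 x}

/-- `x` can reach `y` in exactly `n` elementary transitions. -/
def ReachIn (P : S → S → ℝ) (n : ℕ) (x y : S) : Prop :=
  ∃ f : ℕ → S, f 0 = x ∧ f n = y ∧ ∀ k < n, 0 < P (f (k + 1)) (f k)

/-- `d(y,x)`: the minimum number of transitions needed to go from `x` to `y`. -/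
noncomputable def dSteps (P : S → S → ℝ) (x y : S) : ℕ :=
  sInf {n | ReachIn P n x y}

/-- `R = min { max { d(y,x) | y ∈ S } | x ∈ S \ S_m }`. -/
noncomputable def Rnum [Fintype S] (P : S → S → ℝ) (F1 : S → ℝ) : ℕ :=
  sInf {r | ∃ x, x ∉ Sm P F1 ∧ r = Finset.univ.sup fun y => dSteps P x y}

/-- The maximum change of `F` in a single transition. -/
noncomputable def Lmax [Fintype S] (P : S → S → ℝ) (F : S → ℝ) : ℝ :=
  sSup {v | ∃ x y : S, 0 < P y x ∧ v = |F x - F y|}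

/-- The minimum nonvanishing value of the generation probability. -/
noncomputable def wmin [Fintype S] (P : S → S → ℝ) : ℝ :=
  sInf {v | ∃ x y : S, 0 < P y x ∧ v = P y x}

/-- The set of global minima of `F1`. -/
def S1min [Fintype S] (F1 : S → ℝ) : Set S := {x | ∀ y, F1 x ≤ F1 y}

/-- The limiting distribution: proportional to `exp (-F0 x / T0)` on the set of
global minima of `F1`, and zero elsewhere. -/
noncomputable def rLimit [Fintype S] (F0 F1 : S → ℝ) (T0 : ℝ) (x : S) : ℝ :=
  if ∀ y, F1 x ≤ F1 y then
    Real.exp (-(F0 x) / T0) /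
      ∑ y ∈ Finset.univ.filter (fun y => ∀ z, F1 y ≤ F1 z), Real.exp (-(F0 y) / T0)
  else 0

/-- The ±1 value of a Boolean spin. -/
noncomputable def spin (b : Bool) : ℝ := if b then 1 else -1

/-- Classical Ising energy `E0(x) = -∑_{i<j} J_ij x_i x_j`. -/
noncomputable def E0def (N : ℕ) (J : Fin N → Fin N → ℝ) (x : Fin N → Bool) : ℝ :=
  -∑ p ∈ Finset.univ.filter (fun p : Fin N × Fin N => p.1 < p.2),
    J p.1 p.2 * spin (x p.1) * spin (x p.2)

/-- Hamming distance between spin configurations. -/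
def hamming (N : ℕ) (x y : Fin N → Bool) : ℕ :=
  (Finset.univ.filter fun i => x i ≠ y i).card

/-- GFMC weight `w(x;t) = 1 - Δt (E0(x) - E_T) + N Δt Γ(t)`. -/
noncomputable def wgt (N : ℕ) (J : Fin N → Fin N → ℝ) (Δt ET : ℝ) (Γ : ℕ → ℝ) (t : ℕ)
    (x : Fin N → Bool) : ℝ :=
  1 - Δt * (E0def N J x - ET) + N * Δt * Γ t

/-- The normalized GFMC transition probability `G1(y,x;t)`. -/
noncomputable def G1mat (N : ℕ) (J : Fin N → Fin N → ℝ) (Δt ET : ℝ) (Γ : ℕ → ℝ) (t : ℕ) :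
    Matrix (Fin N → Bool) (Fin N → Bool) ℝ :=
  Matrix.of fun y x =>
    if y = x then 1 - N * Δt * Γ t / wgt N J Δt ET Γ t x
    else if hamming N x y = 1 then Δt * Γ t / wgt N J Δt ET Γ t x
    else 0

/-- `E_min = min { E0(x) | x ∈ S }`. -/
noncomputable def Emin (N : ℕ) (J : Fin N → Fin N → ℝ) : ℝ :=
  Finset.univ.inf' Finset.univ_nonempty (E0def N J)

/-- Stationary distribution `q(x;t) = w(x;t) / ∑_y w(y;t)` of GFMC. -/
noncomputable def qGFMC (N : ℕ) (J : Fin N → Fin N → ℝ) (Δt ET : ℝ) (Γ : ℕ → ℝ) (t : ℕ)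
    (x : Fin N → Bool) : ℝ :=
  wgt N J Δt ET Γ t x / ∑ y, wgt N J Δt ET Γ t y

/-- The alternative GFMC transition probability `G2(y,x;t)`. -/
noncomputable def G2mat (N : ℕ) (Δt : ℝ) (Γ : ℕ → ℝ) (t : ℕ) :
    Matrix (Fin N → Bool) (Fin N → Bool) ℝ :=
  Matrix.of fun y x =>
    (Real.cosh (Δt * Γ t) * Real.exp (-(Δt * Γ t))) ^ N *
      Real.tanh (Δt * Γ t) ^ hamming N x y

/-- Inverse hyperbolic tangent. -/
noncomputable def artanh (x : ℝ) : ℝ := (1 / 2) * Real.log ((1 + x) / (1 - x))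

/-- The cost function of the Suzuki–Trotter representation of the TFIM:
`F0(x) = -(β/M) ∑_k ∑_{ij} J_ij S_i^(k) S_j^(k)`. -/
noncomputable def F0tfim (N M : ℕ) (β : ℝ) (J : Fin (N + 1) → Fin (N + 1) → ℝ)
    (x : Fin (N + 1) × Fin M → Bool) : ℝ :=
  -(β / M) * ∑ k : Fin M, ∑ i : Fin (N + 1), ∑ j : Fin (N + 1),
    J i j * spin (x (i, k)) * spin (x (j, k))

/-- The kinetic term of the Suzuki–Trotter representation of the TFIM:
`F1(x) = -∑_k ∑_i S_i^(k) S_i^(k+1)` with periodic boundary along the Trotter direction. -/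
noncomputable def F1tfim (N M : ℕ) [NeZero M] (x : Fin (N + 1) × Fin M → Bool) : ℝ :=
  -∑ k : Fin M, ∑ i : Fin (N + 1), spin (x (i, k)) * spin (x (i, k + 1))

/-- The ferromagnetic coupling `γ(t) = (1/2) log coth (β Γ(t) / M)` between Trotter slices. -/
noncomputable def γtfim (M : ℕ) (β : ℝ) (Γ : ℕ → ℝ) (t : ℕ) : ℝ :=
  (1 / 2) * Real.log (1 / Real.tanh (β * Γ t / M))

/-- Tsallis-type generalized acceptance ratio `u(y,x;t)`. -/
noncomputable def uGen {S : Type*} (F0 F1 : S → ℝ) (T0 : ℝ) (T1 : ℕ → ℝ) (qp : ℝ) (t : ℕ)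
    (y x : S) : ℝ :=
  Real.exp (-(F0 y - F0 x) / T0) *
    (1 + (qp - 1) * (F1 y - F1 x) / T1 t) ^ (1 / (1 - qp))

section Products

variable [Fintype S] [DecidableEq S]

lemma prodG_self (G : ℕ → Matrix S S ℝ) (t0 : ℕ) : prodG G t0 t0 = 1 := by
  simp [prodG]

lemma prodG_succ (G : ℕ → Matrix S S ℝ) {t t0 : ℕ} (h : t0 ≤ t) :
    prodG G (t + 1) t0 = G t * prodG G t t0 := by
  unfold prodG
  rw [show t + 1 - t0 = t - t0 + 1 by omega, List.range_succ, List.map_append,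
    List.reverse_append]
  simp [show t0 + (t - t0) = t by omega]

lemma prodG_mul_prodG (G : ℕ → Matrix S S ℝ) {t s t0 : ℕ} (h1 : t0 ≤ s) (h2 : s ≤ t) :
    prodG G t s * prodG G s t0 = prodG G t t0 := by
  induction t, h2 using Nat.le_induction with
  | base => rw [prodG_self, one_mul]
  | succ t hst ih => rw [prodG_succ G hst, prodG_succ G (h1.trans hst), mul_assoc, ih]

end Products

section Stochastic

variable [Fintype S]

lemma isStochastic_one [DecidableEq S] : IsStochastic (1 : Matrix S S ℝ) :=
  ⟨fun y x => by by_cases h : y = x <;> simp [Matrix.one_apply, h],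
    fun x => by simp [Matrix.one_apply]⟩

lemma sum_abs_mulVec_le_of_colSum_eq {M : Matrix S S ℝ} {c : ℝ} (hM : ∀ y x, 0 ≤ M y x)
    (hcol : ∀ x, ∑ y, M y x = c) (v : S → ℝ) :
    ∑ y, |M.mulVec v y| ≤ c * ∑ x, |v x| :=
  calc ∑ y, |M.mulVec v y| ≤ ∑ y, ∑ x, M y x * |v x| := by
        refine Finset.sum_le_sum fun y _ => (Finset.abs_sum_le_sum_abs _ _).trans_eq ?_
        simp only [abs_mul, abs_of_nonneg (hM y _)]
  _ = c * ∑ x, |v x| := by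
        rw [Finset.sum_comm, Finset.mul_sum]
        simp only [← Finset.sum_mul, hcol]

namespace IsStochastic

variable {A B G : Matrix S S ℝ}

lemma sum_mulVec (hG : IsStochastic G) (v : S → ℝ) : ∑ y, G.mulVec v y = ∑ x, v x := by
  simp only [Matrix.mulVec, dotProduct]
  rw [Finset.sum_comm]
  exact Finset.sum_congr rfl fun x _ => by rw [← Finset.sum_mul, hG.2 x, one_mul]

lemma mul (hA : IsStochastic A) (hB : IsStochastic B) : IsStochastic (A * B) :=
  ⟨fun y x => Finset.sum_nonneg fun z _ => mul_nonneg (hA.1 y z) (hB.1 z x),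
    fun x => (hA.sum_mulVec fun z => B z x).trans (hB.2 x)⟩

lemma le_mul_apply (hA : IsStochastic A) (hB : IsStochastic B) (y z x : S) :
    A y z * B z x ≤ (A * B) y x :=
  Finset.single_le_sum (f := fun w => A y w * B w x)
    (fun w _ => mul_nonneg (hA.1 y w) (hB.1 w x)) (Finset.mem_univ z)

lemma apply_le_one (hG : IsStochastic G) (y x : S) : G y x ≤ 1 :=
  (Finset.single_le_sum (fun z _ => hG.1 z x) (Finset.mem_univ y)).trans_eq (hG.2 x)

lemma isProbVec_mulVec (hG : IsStochastic G) {p : S → ℝ} (hp : IsProbVec p) :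
    IsProbVec (G.mulVec p) :=
  ⟨fun y => Finset.sum_nonneg fun x _ => mul_nonneg (hG.1 y x) (hp.1 x),
    (hG.sum_mulVec p).trans hp.2⟩

lemma sum_abs_mulVec_le (hG : IsStochastic G) (v : S → ℝ) :
    ∑ y, |G.mulVec v y| ≤ ∑ x, |v x| := by
  simpa using sum_abs_mulVec_le_of_colSum_eq hG.1 hG.2 v

/-- Dobrushin's bound. Subtracting `δ` from row `x0` leaves a nonnegative matrix with column
sums `1 - δ` that acts on mean-zero vectors exactly as `G` does. -/
lemma sum_abs_mulVec_le_of_le_row [DecidableEq S] (hG : IsStochastic G) (x0 : S) {δ : ℝ}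
    (hδ : ∀ x, δ ≤ G x0 x) {v : S → ℝ} (hv : ∑ x, v x = 0) :
    ∑ y, |G.mulVec v y| ≤ (1 - δ) * ∑ x, |v x| := by
  set G' : Matrix S S ℝ := Matrix.of fun y x => G y x - if y = x0 then δ else 0
  have hG'_nonneg : ∀ y x, 0 ≤ G' y x := by
    intro y x
    by_cases h : y = x0
    · subst h; simpa [G'] using hδ x
    · simpa [G', h] using hG.1 y x
  have hG'_mulVec : ∀ y, G'.mulVec v y = G.mulVec v y := by
    intro y
    simp only [Matrix.mulVec, dotProduct, G', Matrix.of_apply, sub_mul, Finset.sum_sub_distrib]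
    rw [← Finset.mul_sum, hv, mul_zero, sub_zero]
  have hG'_col : ∀ x, ∑ y, G' y x = 1 - δ := fun x => by
    simp [G', Finset.sum_sub_distrib, hG.2 x]
  simpa only [hG'_mulVec] using sum_abs_mulVec_le_of_colSum_eq hG'_nonneg hG'_col v

end IsStochastic

end Stochastic

section Chains

variable [Fintype S] [DecidableEq S] {G : ℕ → Matrix S S ℝ}

lemma isStochastic_prodG (hG : ∀ t, IsStochastic (G t)) (t t0 : ℕ) :
    IsStochastic (prodG G t t0) :=
  List.prod_induction _ (fun _ _ hA hB => hA.mul hB) isStochastic_one fun A hA => by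
    obtain ⟨k, -, rfl⟩ := List.mem_map.1 (List.mem_reverse.1 hA)
    exact hG _

lemma pow_le_prodG_apply_of_path (hG : ∀ t, IsStochastic (G t)) {c : ℝ} (hc : 0 ≤ c)
    (s : ℕ) (f : ℕ → S) (n : ℕ) (hstep : ∀ k < n, c ≤ G (s + k) (f (k + 1)) (f k)) :
    c ^ n ≤ prodG G (s + n) s (f n) (f 0) := by
  induction n with
  | zero => simp [prodG_self]
  | succ n ih =>
    rw [← add_assoc, prodG_succ G (Nat.le_add_right s n), pow_succ']
    exact (mul_le_mul (hstep n n.lt_succ_self) (ih fun k hk => hstep k (hk.trans n.lt_succ_self))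
      (pow_nonneg hc n) ((hG _).1 _ _)).trans
      ((hG _).le_mul_apply (isStochastic_prodG hG _ _) _ _ _)

lemma pow_le_prodG_apply_of_reachIn (hG : ∀ t, IsStochastic (G t)) {P : S → S → ℝ}
    {c : ℝ} (hc : 0 ≤ c) {s d n : ℕ} {x x0 : S} (hreach : ReachIn P d x x0) (hdn : d ≤ n)
    (hedge : ∀ u, s ≤ u → u < s + n → ∀ z z', 0 < P z' z → c ≤ G u z' z)
    (hloop : ∀ u, s ≤ u → u < s + n → c ≤ G u x0 x0) :
    c ^ n ≤ prodG G (s + n) s x0 x := by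
  induction n, hdn using Nat.le_induction with
  | base =>
    obtain ⟨f, rfl, rfl, hf⟩ := hreach
    exact pow_le_prodG_apply_of_path hG hc s f d fun k hk =>
      hedge _ (Nat.le_add_right s k) (by omega) _ _ (hf k hk)
  | succ n hdn ih =>
    rw [← add_assoc, prodG_succ G (Nat.le_add_right s n), pow_succ']
    refine (mul_le_mul (hloop _ (Nat.le_add_right s n) (by omega))
      (ih (fun u hu hun => hedge u hu (by omega)) fun u hu hun => hloop u hu (by omega))
      (pow_nonneg hc n) ((hG _).1 _ _)).trans
      ((hG _).le_mul_apply (isStochastic_prodG hG _ _) _ _ _)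

lemma sum_abs_prodG_mulVec_le_prod (hG : ∀ t, IsStochastic (G t)) {R T : ℕ} {δ : ℕ → ℝ}
    {x0 : ℕ → S} (hδ : ∀ s ≥ T, ∀ x, δ s ≤ prodG G (s + R) s (x0 s) x) {a : ℕ}
    (ha : T ≤ a) (K : ℕ) {v : S → ℝ} (hv : ∑ x, v x = 0) :
    ∑ y, |(prodG G (a + K * R) a).mulVec v y|
      ≤ (∏ k ∈ Finset.range K, (1 - δ (a + k * R))) * ∑ x, |v x| := by
  induction K with
  | zero => simp [prodG_self]
  | succ K ih =>
    set b := a + K * R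
    have hb : T ≤ b := ha.trans (Nat.le_add_right a _)
    have hδ1 : δ b ≤ 1 := (hδ b hb (x0 b)).trans ((isStochastic_prodG hG _ _).apply_le_one _ _)
    rw [show a + (K + 1) * R = b + R by ring, ← prodG_mul_prodG G (Nat.le_add_right a _)
      (Nat.le_add_right b R), ← Matrix.mulVec_mulVec, Finset.prod_range_succ, mul_comm _ (1 - _),
      mul_assoc]
    refine ((isStochastic_prodG hG _ _).sum_abs_mulVec_le_of_le_row (x0 b) (hδ b hb)
      ?_).trans (mul_le_mul_of_nonneg_left ih (sub_nonneg.2 hδ1))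
    rw [(isStochastic_prodG hG _ _).sum_mulVec, hv]

end Chains

lemma tendsto_prod_one_sub_of_tendsto_sum {δ : ℕ → ℝ} (hδ : ∀ k, δ k ≤ 1)
    (h : Tendsto (fun K => ∑ k ∈ Finset.range K, δ k) atTop atTop) :
    Tendsto (fun K => ∏ k ∈ Finset.range K, (1 - δ k)) atTop (nhds 0) := by
  refine squeeze_zero (fun K => Finset.prod_nonneg fun k _ => sub_nonneg.2 (hδ k))
    (fun K => ?_) (Real.tendsto_exp_atBot.comp (tendsto_neg_atTop_atBot.comp h))
  calc ∏ k ∈ Finset.range K, (1 - δ k) ≤ ∏ k ∈ Finset.range K, Real.exp (-δ k) :=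
        Finset.prod_le_prod (fun k _ => sub_nonneg.2 (hδ k)) fun k _ => by
          linarith [Real.add_one_le_exp (-δ k)]
  _ = Real.exp (-∑ k ∈ Finset.range K, δ k) := by
        rw [← Finset.sum_neg_distrib, Real.exp_sum]

section Distance

variable [Fintype S]

lemma dist1_nonneg (p p' : S → ℝ) : 0 ≤ dist1 p p' :=
  Finset.sum_nonneg fun _ _ => abs_nonneg _

lemma dist1_triangle (p p' p'' : S → ℝ) : dist1 p p'' ≤ dist1 p p' + dist1 p' p'' := by
  rw [dist1, dist1, dist1, ← Finset.sum_add_distrib]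
  exact Finset.sum_le_sum fun x _ => abs_sub_le _ _ _

lemma dist1_comm (p p' : S → ℝ) : dist1 p p' = dist1 p' p := by
  simp only [dist1, abs_sub_comm]

lemma dist1_le_two {p p' : S → ℝ} (hp : IsProbVec p) (hp' : IsProbVec p') :
    dist1 p p' ≤ 2 := by
  calc dist1 p p' ≤ ∑ x, (p x + p' x) := Finset.sum_le_sum fun x _ =>
        (abs_sub _ _).trans_eq (by rw [abs_of_nonneg (hp.1 x), abs_of_nonneg (hp'.1 x)])
  _ = 2 := by rw [Finset.sum_add_distrib, hp.2, hp'.2]; norm_num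

lemma dist1_mulVec (A : Matrix S S ℝ) (p p' : S → ℝ) :
    dist1 (A.mulVec p) (A.mulVec p') = ∑ y, |A.mulVec (p - p') y| := by
  simp only [dist1, Matrix.mulVec_sub, Pi.sub_apply]

variable [DecidableEq S] {G : ℕ → Matrix S S ℝ}

lemma dist1_prodG_mulVec_le (hG : ∀ t, IsStochastic (G t)) {q : ℕ → S → ℝ}
    (hstat : ∀ t, (G t).mulVec (q t) = q t) {s t : ℕ} (hst : s ≤ t) :
    dist1 ((prodG G t s).mulVec (q s)) (q t)
      ≤ ∑ k ∈ Finset.Ico s t, dist1 (q (k + 1)) (q k) := by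
  induction t, hst using Nat.le_induction with
  | base => simp [prodG_self, dist1]
  | succ t hst ih =>
    rw [Finset.sum_Ico_succ_top hst, prodG_succ G hst, ← Matrix.mulVec_mulVec]
    calc dist1 ((G t).mulVec ((prodG G t s).mulVec (q s))) (q (t + 1))
        ≤ dist1 ((G t).mulVec ((prodG G t s).mulVec (q s))) ((G t).mulVec (q t))
          + dist1 ((G t).mulVec (q t)) (q (t + 1)) := dist1_triangle _ _ _
    _ ≤ _ := by
        rw [dist1_mulVec, hstat, dist1_comm]
        exact add_le_add_left (((hG t).sum_abs_mulVec_le _).trans ih) _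

end Distance

section Ergodicity

variable [Fintype S] [DecidableEq S] {G : ℕ → Matrix S S ℝ}

theorem weaklyErgodic_of_minorization (hG : ∀ t, IsStochastic (G t)) {R T : ℕ}
    {δ : ℕ → ℝ} {x0 : ℕ → S}
    (hδ : ∀ s ≥ T, ∀ x, δ s ≤ prodG G (s + R) s (x0 s) x)
    (hdiv : ∀ a ≥ T, Tendsto (fun K => ∑ k ∈ Finset.range K, δ (a + k * R)) atTop atTop) :
    WeaklyErgodic G := by
  intro t0 ε hε
  set a := max t0 T
  have hδ1 : ∀ k, δ (a + k * R) ≤ 1 := fun k =>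
    (hδ _ ((le_max_right t0 T).trans (Nat.le_add_right a _)) (x0 (a + k * R))).trans
      ((isStochastic_prodG hG _ _).apply_le_one _ _)
  obtain ⟨K, hK⟩ := ((tendsto_prod_one_sub_of_tendsto_sum hδ1
    (hdiv a (le_max_right _ _))).eventually (gt_mem_nhds (half_pos hε))).exists
  refine ⟨a + K * R, fun t ht p0 p0' hp0 hp0' => ?_⟩
  have hsplit : prodG G t t0 = prodG G t (a + K * R) * prodG G (a + K * R) a * prodG G a t0 := by
    rw [prodG_mul_prodG G (Nat.le_add_right a _) ht,
      prodG_mul_prodG G (le_max_left t0 T) ((Nat.le_add_right a _).trans ht)]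
  set w := (prodG G a t0).mulVec (p0 - p0')
  have hw : ∑ x, w x = 0 := by
    rw [(isStochastic_prodG hG _ _).sum_mulVec]
    simp only [Pi.sub_apply]
    rw [Finset.sum_sub_distrib, hp0.2, hp0'.2, sub_self]
  calc dist1 ((prodG G t t0).mulVec p0) ((prodG G t t0).mulVec p0')
      = ∑ y, |(prodG G t (a + K * R)).mulVec ((prodG G (a + K * R) a).mulVec w) y| := by
        rw [dist1_mulVec, hsplit, Matrix.mulVec_mulVec, Matrix.mulVec_mulVec, Matrix.mul_assoc]
  _ ≤ ∑ y, |(prodG G (a + K * R) a).mulVec w y| :=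
        (isStochastic_prodG hG _ _).sum_abs_mulVec_le _
  _ ≤ (∏ k ∈ Finset.range K, (1 - δ (a + k * R))) * ∑ x, |w x| :=
        sum_abs_prodG_mulVec_le_prod hG hδ (le_max_right _ _) K hw
  _ ≤ ε / 2 * 2 := by
        refine mul_le_mul hK.le ?_ (Finset.sum_nonneg fun x _ => abs_nonneg _) (by positivity)
        exact ((isStochastic_prodG hG _ _).sum_abs_mulVec_le _).trans (dist1_le_two hp0 hp0')
  _ = ε := by ring

lemma sum_Ico_le_tsum_nat_add {f : ℕ → ℝ} (hf0 : ∀ n, 0 ≤ f n) (hf : Summable f)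
    (s t : ℕ) :
    ∑ k ∈ Finset.Ico s t, f k ≤ ∑' k, f (k + s) := by
  rw [Finset.sum_Ico_eq_sum_range]
  simp only [add_comm s]
  exact ((summable_nat_add_iff s).2 hf).sum_le_tsum _ fun k _ => hf0 _

theorem stronglyErgodicTo_of_weaklyErgodic (hG : ∀ t, IsStochastic (G t))
    (hweak : WeaklyErgodic G) {q : ℕ → S → ℝ} {r : S → ℝ} (hq : ∀ t, IsProbVec (q t))
    (hstat : ∀ t, (G t).mulVec (q t) = q t)
    (hdrift : Summable fun t => dist1 (q (t + 1)) (q t))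
    (hlim : Tendsto (fun t => dist1 (q t) r) atTop (nhds 0)) :
    StronglyErgodicTo G r := by
  intro t0 ε hε
  have hε3 : 0 < ε / 3 := by positivity
  obtain ⟨N, hN⟩ := eventually_atTop.1
    (((tendsto_sum_nat_add fun t => dist1 (q (t + 1)) (q t)).eventually
      (gt_mem_nhds hε3)).and (hlim.eventually (gt_mem_nhds hε3)))
  set s := max t0 N
  obtain ⟨T, hT⟩ := hweak s (ε / 3) hε3
  refine ⟨max s T, fun t ht p0 hp0 => ?_⟩
  have hst : s ≤ t := (le_max_left _ _).trans ht
  set v := (prodG G s t0).mulVec p0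
  have hv : (prodG G t t0).mulVec p0 = (prodG G t s).mulVec v := by
    rw [Matrix.mulVec_mulVec, prodG_mul_prodG G (le_max_left _ _) hst]
  have h1 := hT t ((le_max_right _ _).trans ht) v (q s)
    ((isStochastic_prodG hG _ _).isProbVec_mulVec hp0) (hq s)
  have h2 := (dist1_prodG_mulVec_le hG hstat hst).trans
    (sum_Ico_le_tsum_nat_add (fun _ => dist1_nonneg _ _) hdrift s t)
  have h3 := (hN s (le_max_right _ _)).1
  have h4 := (hN t ((le_max_right _ _).trans hst)).2
  rw [hv]
  linarith [dist1_triangle ((prodG G t s).mulVec v) ((prodG G t s).mulVec (q s)) r,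
    dist1_triangle ((prodG G t s).mulVec (q s)) (q t) r]

end Ergodicity

section Variation

lemma summable_abs_sub_of_monotone {v : ℕ → ℝ} {l : ℝ} (hv : Monotone v)
    (hlim : Tendsto v atTop (nhds l)) : Summable fun n => |v (n + 1) - v n| := by
  simp only [abs_of_nonneg (sub_nonneg.2 (hv (Nat.le_succ _)))]
  refine ⟨l - v 0,
    (hasSum_iff_tendsto_nat_of_nonneg (fun n => sub_nonneg.2 (hv n.le_succ)) _).2 ?_⟩
  simpa only [Finset.sum_range_sub] using hlim.sub_const (v 0)

lemma summable_abs_sub_of_eventually_monotone {u : ℕ → ℝ} {l : ℝ}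
    (hlim : Tendsto u atTop (nhds l)) (T : ℕ)
    (hu : Monotone (fun n => u (n + T)) ∨ Antitone (fun n => u (n + T))) :
    Summable fun n => |u (n + 1) - u n| := by
  have hlimT : Tendsto (fun n => u (n + T)) atTop (nhds l) := hlim.comp (tendsto_add_atTop_nat T)
  have key : Summable fun n => |u (n + 1 + T) - u (n + T)| := by
    rcases hu with hmono | hanti
    · exact summable_abs_sub_of_monotone (v := fun n => u (n + T)) hmono hlimT
    · simpa [abs_sub_comm, neg_add_eq_sub] using
        summable_abs_sub_of_monotone (v := fun n => -u (n + T)) hanti.neg hlimT.neg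
  exact (summable_nat_add_iff T).1 (by simpa only [Nat.add_right_comm _ 1 T] using key)

end Variation

section ExpSum

variable {ι : Type*} [Fintype ι] (a c : ι → ℝ)

noncomputable def expSum (β : ℝ) : ℝ := ∑ i, a i * Real.exp (c i * β)

lemma expSum_pos [Nonempty ι] (ha : ∀ i, 0 < a i) (β : ℝ) : 0 < expSum a c β :=
  Finset.sum_pos (fun i _ => mul_pos (ha i) (Real.exp_pos _)) Finset.univ_nonempty

lemma hasDerivAt_expSum (β : ℝ) :
    HasDerivAt (expSum a c) (∑ i, a i * (c i * Real.exp (c i * β))) β := by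
  refine HasDerivAt.fun_sum fun i _ => ?_
  simpa [mul_comm] using (((hasDerivAt_id β).const_mul (c i)).exp).const_mul (a i)

lemma antitone_expSum (ha : ∀ i, 0 ≤ a i) (hc : ∀ i, c i ≤ 0) : Antitone (expSum a c) :=
  fun _ _ h => Finset.sum_le_sum fun i _ =>
    mul_le_mul_of_nonneg_left (Real.exp_le_exp.2 (mul_le_mul_of_nonpos_left h (hc i))) (ha i)

/-- Factoring out `exp (c i₀ β)` for a maximal exponent `c i₀ > 0`, the derivative is
`exp (c i₀ β)` times a sum tending to `∑_{cᵢ = c i₀} aᵢ cᵢ > 0`. -/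
lemma eventually_deriv_expSum_pos (ha : ∀ i, 0 < a i) (hc : ∃ i, 0 < c i) :
    ∀ᶠ β in atTop, 0 < ∑ i, a i * (c i * Real.exp (c i * β)) := by
  obtain ⟨j, hj⟩ := hc
  obtain ⟨i0, -, hi0⟩ := Finset.exists_max_image Finset.univ c ⟨j, Finset.mem_univ j⟩
  have hc0 : 0 < c i0 := hj.trans_le (hi0 j (Finset.mem_univ j))
  have hlim : Tendsto (fun β => ∑ i, a i * (c i * Real.exp ((c i - c i0) * β))) atTop
      (nhds (∑ i, if c i = c i0 then a i * c i else 0)) := by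
    refine tendsto_finsetSum _ fun i _ => ?_
    split_ifs with h
    · simp [h]
    · have hneg : c i - c i0 < 0 :=
        lt_of_le_of_ne (sub_nonpos.2 (hi0 i (Finset.mem_univ i))) (sub_ne_zero.2 h)
      simpa using ((Real.tendsto_exp_atBot.comp
        (tendsto_id.const_mul_atTop_of_neg hneg)).const_mul (c i)).const_mul (a i)
  have hM : 0 < ∑ i, if c i = c i0 then a i * c i else 0 := by
    refine Finset.sum_pos' (fun i _ => ?_)
      ⟨i0, Finset.mem_univ _, by simp [mul_pos (ha i0) hc0]⟩
    split_ifs with h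
    · exact mul_nonneg (ha i).le (h ▸ hc0.le)
    · exact le_rfl
  filter_upwards [hlim.eventually (lt_mem_nhds hM)] with β hβ
  have hfactor : ∑ i, a i * (c i * Real.exp (c i * β))
      = Real.exp (c i0 * β) * ∑ i, a i * (c i * Real.exp ((c i - c i0) * β)) := by
    rw [Finset.mul_sum]
    refine Finset.sum_congr rfl fun i _ => ?_
    rw [sub_mul, Real.exp_sub]
    field_simp
  rw [hfactor]
  exact mul_pos (Real.exp_pos _) hβ

lemma exists_monotoneOn_or_antitoneOn_expSum (ha : ∀ i, 0 < a i) :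
    ∃ B, MonotoneOn (expSum a c) (Set.Ici B) ∨ AntitoneOn (expSum a c) (Set.Ici B) := by
  by_cases hc : ∃ i, 0 < c i
  · obtain ⟨B, hB⟩ := eventually_atTop.1 (eventually_deriv_expSum_pos a c ha hc)
    refine ⟨B, Or.inl (strictMonoOn_of_deriv_pos (convex_Ici B)
      (fun β _ => (hasDerivAt_expSum a c β).continuousAt.continuousWithinAt)
      fun β hβ => ?_).monotoneOn⟩
    rw [interior_Ici] at hβ
    rw [(hasDerivAt_expSum a c β).deriv]
    exact hB β (le_of_lt hβ)
  · simp only [not_exists, not_lt] at hc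
    exact ⟨0, Or.inr ((antitone_expSum a c (fun i => (ha i).le) hc).antitoneOn _)⟩

lemma tendsto_expSum_of_nonpos (hc : ∀ i, c i ≤ 0) :
    Tendsto (expSum a c) atTop (nhds (∑ i with c i = 0, a i)) := by
  rw [Finset.sum_filter]
  refine tendsto_finsetSum _ fun i _ => ?_
  split_ifs with h
  · simp [h]
  · simpa using (Real.tendsto_exp_atBot.comp
      (tendsto_id.const_mul_atTop_of_neg (lt_of_le_of_ne (hc i) h))).const_mul (a i)

lemma tendsto_expSum_atTop (ha : ∀ i, 0 ≤ a i) {i0 : ι} (ha0 : 0 < a i0) (hc0 : 0 < c i0) :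
    Tendsto (expSum a c) atTop atTop :=
  tendsto_atTop_mono (fun β => Finset.single_le_sum (f := fun i => a i * Real.exp (c i * β))
      (fun i _ => mul_nonneg (ha i) (Real.exp_pos _).le) (Finset.mem_univ i0))
    ((Real.tendsto_exp_atTop.comp (tendsto_id.const_mul_atTop hc0)).const_mul_atTop ha0)

end ExpSum

section Metropolis

variable [Fintype S] [DecidableEq S] {P : S → S → ℝ} {A : ℕ → S → S → ℝ} {t : ℕ}

lemma gmatOf_apply_of_ne {y x : S} (h : y ≠ x) : GmatOf P A t y x = P y x * A t y x := by
  simp [GmatOf, h]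

lemma mul_one_sub_le_gmatOf_diag (hP : IsGenProb P) (hA : ∀ y x, A t y x ≤ 1) (y x : S) :
    P y x * (1 - A t y x) ≤ GmatOf P A t x x := by
  have hdiag : GmatOf P A t x x = ∑ z, P z x * (1 - A t z x) := by
    simp [GmatOf, mul_sub, Finset.sum_sub_distrib, hP.sum_one x]
  rw [hdiag]
  exact Finset.single_le_sum (f := fun z => P z x * (1 - A t z x))
    (fun z _ => mul_nonneg (hP.nonneg x z) (sub_nonneg.2 (hA z x))) (Finset.mem_univ y)

lemma isStochastic_gmatOf (hP : IsGenProb P) (hA : ∀ y x, A t y x ∈ Set.Icc (0 : ℝ) 1) :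
    IsStochastic (GmatOf P A t) := by
  refine ⟨fun y x => ?_, fun x => ?_⟩
  · rcases eq_or_ne y x with rfl | h
    · simpa [hP.diag_zero] using mul_one_sub_le_gmatOf_diag hP (fun y x => (hA y x).2) y y
    · rw [gmatOf_apply_of_ne h]
      exact mul_nonneg (hP.nonneg x y) (hA y x).1
  · rw [← Finset.add_sum_erase _ _ (Finset.mem_univ x),
      Finset.sum_congr rfl fun y hy => gmatOf_apply_of_ne (Finset.ne_of_mem_erase hy),
      Finset.sum_erase _ (by simp [hP.diag_zero])]
    simp [GmatOf]

lemma gmatOf_mulVec_eq_self (hP : IsGenProb P) {q : S → ℝ}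
    (hbal : ∀ x y, P y x * A t y x * q x = P x y * A t x y * q y) :
    (GmatOf P A t).mulVec q = q := by
  funext y
  simp only [Matrix.mulVec, dotProduct]
  rw [← Finset.add_sum_erase _ _ (Finset.mem_univ y),
    Finset.sum_congr rfl fun x hx => by
      rw [gmatOf_apply_of_ne (Finset.ne_of_mem_erase hx).symm, hbal x y],
    ← Finset.sum_mul, Finset.sum_erase _ (by simp [hP.diag_zero])]
  simp only [GmatOf, Matrix.of_apply, if_true]
  ring

end Metropolis

namespace IsAcceptFn

variable {g : ℝ → ℝ}

lemma mul_min_le (hg : IsAcceptFn g) {u : ℝ} (hu : 0 < u) : g 1 * min u 1 ≤ g u := by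
  rcases le_or_gt 1 u with h | h
  · rw [min_eq_right h, mul_one]
    exact hg.mono (Set.mem_Ici.2 zero_le_one) (Set.mem_Ici.2 hu.le) h
  · have h1 : g 1 ≤ g (1 / u) :=
      hg.mono (Set.mem_Ici.2 zero_le_one) (Set.mem_Ici.2 (by positivity))
        ((le_div_iff₀ hu).2 (by linarith))
    rw [hg.ratio u hu, le_div_iff₀ hu] at h1
    rwa [min_eq_left h.le]

lemma le_self (hg : IsAcceptFn g) {u : ℝ} (hu : 0 < u) : g u ≤ u := by
  have h := (hg.maps (1 / u) (by positivity)).2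
  rwa [hg.ratio u hu, div_le_one hu] at h

end IsAcceptFn

section Boltzmann

variable [Fintype S] (F0 F1 : S → ℝ) (T0 : ℝ) (T1 : ℕ → ℝ)

lemma zfun_pos [Nonempty S] (t : ℕ) : 0 < Zfun F0 F1 T0 T1 t :=
  Finset.sum_pos (fun _ _ => Real.exp_pos _) Finset.univ_nonempty

lemma qB_pos [Nonempty S] (t : ℕ) (x : S) : 0 < qB F0 F1 T0 T1 t x :=
  div_pos (Real.exp_pos _) (zfun_pos F0 F1 T0 T1 t)

lemma qB_isProbVec [Nonempty S] (t : ℕ) : IsProbVec (qB F0 F1 T0 T1 t) :=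
  ⟨fun x => (qB_pos F0 F1 T0 T1 t x).le, by
    simp only [qB]
    rw [← Finset.sum_div]
    exact div_self (zfun_pos F0 F1 T0 T1 t).ne'⟩

lemma qB_div_qB [Nonempty S] (t : ℕ) (y x : S) :
    qB F0 F1 T0 T1 t y / qB F0 F1 T0 T1 t x
      = Real.exp (-(F0 y - F0 x) / T0 - (F1 y - F1 x) / T1 t) := by
  unfold qB
  rw [div_div_div_cancel_right₀ (zfun_pos F0 F1 T0 T1 t).ne', ← Real.exp_sub]
  ring_nf

end Boltzmann

section Limit

variable [Fintype S] (F0 F1 : S → ℝ) (T0 : ℝ) {T1 : ℕ → ℝ}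

lemma tendsto_inv_atTop_of_pos {f : ℕ → ℝ} (hpos : ∀ t, 0 < f t)
    (hlim : Tendsto f atTop (nhds 0)) : Tendsto (fun t => (f t)⁻¹) atTop atTop :=
  (tendsto_nhdsWithin_iff.2 ⟨hlim, .of_forall hpos⟩).inv_tendsto_nhdsGT_zero

lemma qB_eq_div_expSum (t : ℕ) (x : S) :
    qB F0 F1 T0 T1 t x = Real.exp (-(F0 x) / T0)
      / expSum (fun y => Real.exp (-(F0 y) / T0)) (fun y => F1 x - F1 y) (T1 t)⁻¹ := by
  have h : expSum (fun y => Real.exp (-(F0 y) / T0)) (fun y => F1 x - F1 y) (T1 t)⁻¹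
      = Real.exp (F1 x / T1 t) * Zfun F0 F1 T0 T1 t := by
    rw [expSum, Zfun, Finset.mul_sum]
    refine Finset.sum_congr rfl fun y _ => ?_
    rw [← Real.exp_add, ← Real.exp_add]
    ring_nf
  rw [h, ← div_div, ← Real.exp_sub, qB]

lemma tendsto_qB_rLimit (hT1pos : ∀ t, 0 < T1 t) (hT1lim : Tendsto T1 atTop (nhds 0)) (x : S) :
    Tendsto (fun t => qB F0 F1 T0 T1 t x) atTop (nhds (rLimit F0 F1 T0 x)) := by
  have hβ := tendsto_inv_atTop_of_pos hT1pos hT1lim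
  simp only [qB_eq_div_expSum]
  by_cases hx : ∀ y, F1 x ≤ F1 y
  · have hW := (tendsto_expSum_of_nonpos (fun y => Real.exp (-(F0 y) / T0))
      (fun y => F1 x - F1 y) fun y => sub_nonpos.2 (hx y)).comp hβ
    have hmin : ∀ y, F1 x - F1 y = 0 ↔ ∀ z, F1 y ≤ F1 z := fun y =>
      ⟨fun h z => (sub_eq_zero.1 h) ▸ hx z, fun h => by linarith [h x, hx y]⟩
    rw [Finset.filter_congr fun y _ => hmin y] at hW
    rw [rLimit, if_pos hx]
    refine tendsto_const_nhds.div hW (Finset.sum_pos (fun _ _ => Real.exp_pos _) ?_).ne'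
    exact ⟨x, Finset.mem_filter.2 ⟨Finset.mem_univ x, hx⟩⟩
  · obtain ⟨z, hz⟩ := not_forall.1 hx
    rw [rLimit, if_neg hx]
    exact tendsto_const_nhds.div_atTop ((tendsto_expSum_atTop (fun y => Real.exp (-(F0 y) / T0))
      (fun y => F1 x - F1 y) (fun _ => (Real.exp_pos _).le) (Real.exp_pos _)
      (sub_pos.2 (not_le.1 hz))).comp hβ)

lemma tendsto_dist1_qB_rLimit (hT1pos : ∀ t, 0 < T1 t) (hT1lim : Tendsto T1 atTop (nhds 0)) :
    Tendsto (fun t => dist1 (qB F0 F1 T0 T1 t) (rLimit F0 F1 T0)) atTop (nhds 0) := by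
  simpa [dist1] using tendsto_finsetSum Finset.univ fun x _ =>
    ((tendsto_qB_rLimit F0 F1 T0 hT1pos hT1lim x).sub_const (rLimit F0 F1 T0 x)).abs

lemma exists_monotone_or_antitone_qB (hT1pos : ∀ t, 0 < T1 t) (hT1anti : Antitone T1)
    (hT1lim : Tendsto T1 atTop (nhds 0)) (x : S) :
    ∃ T, Monotone (fun n => qB F0 F1 T0 T1 (n + T) x)
      ∨ Antitone (fun n => qB F0 F1 T0 T1 (n + T) x) := by
  have : Nonempty S := ⟨x⟩
  have hW : ∀ β, 0 < expSum (fun y => Real.exp (-(F0 y) / T0)) (fun y => F1 x - F1 y) β :=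
    expSum_pos _ _ fun _ => Real.exp_pos _
  obtain ⟨B, hB⟩ := exists_monotoneOn_or_antitoneOn_expSum (fun y => Real.exp (-(F0 y) / T0))
    (fun y => F1 x - F1 y) fun _ => Real.exp_pos _
  obtain ⟨T, hT⟩ := eventually_atTop.1
    ((tendsto_inv_atTop_of_pos hT1pos hT1lim).eventually_ge_atTop B)
  have hβ : ∀ {m n : ℕ}, m ≤ n → (T1 (m + T))⁻¹ ≤ (T1 (n + T))⁻¹ := fun h =>
    inv_anti₀ (hT1pos _) (hT1anti (Nat.add_le_add_right h T))
  have hβB : ∀ n, (T1 (n + T))⁻¹ ∈ Set.Ici B := fun n => hT _ (Nat.le_add_left T n)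
  refine ⟨T, ?_⟩
  simp only [qB_eq_div_expSum]
  rcases hB with hmono | hanti
  · exact Or.inr fun m n h =>
      div_le_div_of_nonneg_left (Real.exp_pos _).le (hW _) (hmono (hβB m) (hβB n) (hβ h))
  · exact Or.inl fun m n h =>
      div_le_div_of_nonneg_left (Real.exp_pos _).le (hW _) (hanti (hβB m) (hβB n) (hβ h))

lemma summable_dist1_qB (hT1pos : ∀ t, 0 < T1 t) (hT1anti : Antitone T1)
    (hT1lim : Tendsto T1 atTop (nhds 0)) :
    Summable fun t => dist1 (qB F0 F1 T0 T1 (t + 1)) (qB F0 F1 T0 T1 t) := by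
  unfold dist1
  refine summable_sum fun x _ => ?_
  obtain ⟨T, hT⟩ := exists_monotone_or_antitone_qB F0 F1 T0 hT1pos hT1anti hT1lim x
  exact summable_abs_sub_of_eventually_monotone (u := fun t => qB F0 F1 T0 T1 t x)
    (tendsto_qB_rLimit F0 F1 T0 hT1pos hT1lim x) T hT

end Limit

section Bounds

variable [Fintype S]

lemma abs_sub_le_lmax (P : S → S → ℝ) (F : S → ℝ) {x y : S} (h : 0 < P y x) :
    |F x - F y| ≤ Lmax P F := by
  refine le_csSup (Set.Finite.bddAbove ?_) ⟨x, y, h, rfl⟩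
  refine (Set.finite_range fun p : S × S => |F p.1 - F p.2|).subset ?_
  rintro _ ⟨x, y, -, rfl⟩
  exact ⟨(x, y), rfl⟩

lemma lmax_nonneg (P : S → S → ℝ) (F : S → ℝ) {x y : S} (h : 0 < P y x) :
    0 ≤ Lmax P F :=
  (abs_nonneg _).trans (abs_sub_le_lmax P F h)

lemma sub_le_lmax (P : S → S → ℝ) (F : S → ℝ) {x y : S} (h : 0 < P y x) :
    F y - F x ≤ Lmax P F :=
  (le_abs_self _).trans ((abs_sub_comm _ _).trans_le (abs_sub_le_lmax P F h))

lemma wmin_set_finite (P : S → S → ℝ) :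
    {v | ∃ x y : S, 0 < P y x ∧ v = P y x}.Finite := by
  refine (Set.finite_range fun p : S × S => P p.2 p.1).subset ?_
  rintro _ ⟨x, y, -, rfl⟩
  exact ⟨(x, y), rfl⟩

lemma wmin_le (P : S → S → ℝ) {x y : S} (h : 0 < P y x) : wmin P ≤ P y x :=
  csInf_le (wmin_set_finite P).bddBelow ⟨x, y, h, rfl⟩

lemma wmin_pos (P : S → S → ℝ) {x y : S} (h : 0 < P y x) : 0 < wmin P := by
  have hne : {v | ∃ x y : S, 0 < P y x ∧ v = P y x}.Nonempty := ⟨_, x, y, h, rfl⟩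
  obtain ⟨_, _, hpos, hmin⟩ := hne.csInf_mem (wmin_set_finite P)
  rw [wmin, hmin]
  exact hpos

lemma reachIn_dSteps {P : S → S → ℝ} (hP : IsGenProb P) (x y : S) :
    ReachIn P (dSteps P x y) x y :=
  Nat.sInf_mem (let ⟨n, _, hn⟩ := hP.irreducible x y; ⟨n, hn⟩)

lemma ReachIn.symm {P : S → S → ℝ} (hP : IsGenProb P) {n : ℕ} {x y : S}
    (h : ReachIn P n x y) : ReachIn P n y x := by
  obtain ⟨f, hf0, hfn, hf⟩ := h
  refine ⟨fun k => f (n - k), by simpa using hfn, by simpa using hf0, fun k hk => ?_⟩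
  rw [hP.symm]
  simpa [show n - k = n - (k + 1) + 1 by omega] using hf (n - (k + 1)) (by omega)

lemma exists_reachIn_le_rnum {P : S → S → ℝ} (hP : IsGenProb P) {F1 : S → ℝ}
    (hne : ∃ x, x ∉ Sm P F1) :
    ∃ x0 ∉ Sm P F1, ∀ x, ∃ d ≤ Rnum P F1, ReachIn P d x x0 := by
  obtain ⟨x0, hx0, hR⟩ := Nat.sInf_mem (s := {r | ∃ x, x ∉ Sm P F1 ∧
    r = Finset.univ.sup fun y => dSteps P x y}) (hne.elim fun x hx => ⟨_, x, hx, rfl⟩)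
  refine ⟨x0, hx0, fun x => ⟨dSteps P x0 x, ?_, (reachIn_dSteps hP x0 x).symm hP⟩⟩
  rw [Rnum, hR]
  exact Finset.le_sup (f := dSteps P x0) (Finset.mem_univ x)

end Bounds

section PIMC

variable [Fintype S] [Nonempty S] (F0 F1 : S → ℝ) (T0 : ℝ) (T1 : ℕ → ℝ)
  {P : S → S → ℝ} {g : ℝ → ℝ}

lemma gpimc_accept_mem (hg : IsAcceptFn g) (t : ℕ) (y x : S) :
    g (qB F0 F1 T0 T1 t y / qB F0 F1 T0 T1 t x) ∈ Set.Icc (0 : ℝ) 1 :=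
  hg.maps _ (div_pos (qB_pos F0 F1 T0 T1 t y) (qB_pos F0 F1 T0 T1 t x)).le

variable [DecidableEq S]

lemma isStochastic_gpimc (hP : IsGenProb P) (hg : IsAcceptFn g) (t : ℕ) :
    IsStochastic (Gpimc P g F0 F1 T0 T1 t) :=
  isStochastic_gmatOf hP fun y x => gpimc_accept_mem F0 F1 T0 T1 hg t y x

/-- Detailed balance, from `g (1 / u) = g u / u`. -/
lemma gpimc_mulVec_qB (hP : IsGenProb P) (hg : IsAcceptFn g) (t : ℕ) :
    (Gpimc P g F0 F1 T0 T1 t).mulVec (qB F0 F1 T0 T1 t) = qB F0 F1 T0 T1 t := by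
  refine gmatOf_mulVec_eq_self hP fun x y => ?_
  have hx := qB_pos F0 F1 T0 T1 t x
  have hy := qB_pos F0 F1 T0 T1 t y
  rw [← one_div_div (qB F0 F1 T0 T1 t y) (qB F0 F1 T0 T1 t x), hg.ratio _ (div_pos hy hx),
    hP.symm x y]
  field_simp

lemma wmin_mul_exp_le_gpimc (hP : IsGenProb P) (hg : IsAcceptFn g) (hT0 : 0 < T0) {t : ℕ}
    (hT : 0 < T1 t) {z z' : S} (h : 0 < P z' z) :
    wmin P * g 1 * Real.exp (-(Lmax P F0 / T0 + Lmax P F1 / T1 t))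
      ≤ Gpimc P g F0 F1 T0 T1 t z' z := by
  set e := Real.exp (-(Lmax P F0 / T0 + Lmax P F1 / T1 t))
  have hne : z' ≠ z := by
    rintro rfl
    exact (hP.diag_zero z').not_gt h
  have hu := div_pos (qB_pos F0 F1 T0 T1 t z') (qB_pos F0 F1 T0 T1 t z)
  have he_le : e ≤ qB F0 F1 T0 T1 t z' / qB F0 F1 T0 T1 t z := by
    rw [qB_div_qB]
    refine Real.exp_le_exp.2 ?_
    have h0 := div_le_div_of_nonneg_right (sub_le_lmax P F0 h) hT0.le
    have h1 := div_le_div_of_nonneg_right (sub_le_lmax P F1 h) hT.le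
    rw [neg_div]
    linarith
  have he1 : e ≤ 1 := Real.exp_le_one_iff.2 (neg_nonpos.2 (add_nonneg
    (div_nonneg (lmax_nonneg P F0 h) hT0.le) (div_nonneg (lmax_nonneg P F1 h) hT.le)))
  have hg1 : 0 ≤ g 1 := (hg.maps 1 zero_le_one).1
  change _ ≤ GmatOf P _ t z' z
  rw [gmatOf_apply_of_ne hne, mul_assoc]
  exact mul_le_mul (wmin_le P h)
    ((mul_le_mul_of_nonneg_left (le_min he_le he1) hg1).trans (hg.mul_min_le hu))
    (mul_nonneg hg1 (Real.exp_pos _).le) (hP.nonneg z z')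

/-- Uphill moves in `F1` are eventually rejected. -/
lemma eventually_le_gpimc_diag (hP : IsGenProb P) (hg : IsAcceptFn g)
    (hT1pos : ∀ t, 0 < T1 t) (hT1lim : Tendsto T1 atTop (nhds 0)) {x y : S}
    (hF : F1 x < F1 y) : ∀ᶠ t in atTop, P y x / 2 ≤ Gpimc P g F0 F1 T0 T1 t x x := by
  have harg : Tendsto (fun t => -(F0 y - F0 x) / T0 + -(F1 y - F1 x) * (T1 t)⁻¹) atTop atBot :=
    tendsto_atBot_add_const_left _ _
      ((tendsto_inv_atTop_of_pos hT1pos hT1lim).const_mul_atTop_of_neg (by linarith))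
  have hratio : Tendsto (fun t => qB F0 F1 T0 T1 t y / qB F0 F1 T0 T1 t x) atTop (nhds 0) := by
    refine (Real.tendsto_exp_atBot.comp harg).congr fun t => ?_
    rw [Function.comp_apply, qB_div_qB]
    ring_nf
  filter_upwards [hratio.eventually (gt_mem_nhds one_half_pos)] with t ht
  have hacc := (hg.le_self (div_pos (qB_pos F0 F1 T0 T1 t y) (qB_pos F0 F1 T0 T1 t x))).trans ht.le
  calc P y x / 2 ≤ P y x * (1 - g (qB F0 F1 T0 T1 t y / qB F0 F1 T0 T1 t x)) := by
        nlinarith [hP.nonneg x y]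
  _ ≤ _ := mul_one_sub_le_gmatOf_diag
        (A := fun t y x => g (qB F0 F1 T0 T1 t y / qB F0 F1 T0 T1 t x)) hP
        (fun y x => (gpimc_accept_mem F0 F1 T0 T1 hg t y x).2) y x

end PIMC

section Minorization

variable [Fintype S] [DecidableEq S] [Nonempty S] (F0 F1 : S → ℝ) (T0 : ℝ) (T1 : ℕ → ℝ)
  {P : S → S → ℝ} {g : ℝ → ℝ}

/-- Each move along a path to `x0` is accepted with probability at least `c exp (-L1 / T1)`; the
path is padded by loops at `x0`, which are eventually likely because uphill moves are rejected. -/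
lemma exists_pow_mul_exp_le_prodG_gpimc (hP : IsGenProb P) (hg : IsAcceptFn g) (hg1 : 0 < g 1)
    (hT0 : 0 < T0) (hT1pos : ∀ t, 0 < T1 t) (hT1anti : Antitone T1)
    (hT1lim : Tendsto T1 atTop (nhds 0)) {x0 : S} (hx0 : x0 ∉ Sm P F1) (n : ℕ) :
    ∃ c > 0, ∃ T, ∀ s ≥ T, ∀ x, ∀ d ≤ n, ReachIn P d x x0 →
      c ^ n * Real.exp (-(n * Lmax P F1 / T1 (s + n)))
        ≤ prodG (Gpimc P g F0 F1 T0 T1) (s + n) s x0 x := by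
  obtain ⟨y, hy, hF⟩ : ∃ y, 0 < P y x0 ∧ F1 x0 < F1 y := by simpa [Sm] using hx0
  obtain ⟨T, hT⟩ := eventually_atTop.1
    (eventually_le_gpimc_diag F0 F1 T0 T1 hP hg hT1pos hT1lim (P := P) hF)
  have hw := wmin_pos P hy
  set c := min (P y x0 / 2) (wmin P * g 1 * Real.exp (-(Lmax P F0 / T0)))
  have hc : 0 < c := lt_min (by linarith) (by positivity)
  refine ⟨c, hc, T, fun s hs x d hd hreach => ?_⟩
  set e := Real.exp (-(Lmax P F1 / T1 (s + n)))
  have he : ∀ u ≤ s + n, e ≤ Real.exp (-(Lmax P F1 / T1 u)) := fun u hu =>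
    Real.exp_le_exp.2 (neg_le_neg (div_le_div_of_nonneg_left (lmax_nonneg P F1 hy) (hT1pos _)
      (hT1anti hu)))
  have he1 : e ≤ 1 := Real.exp_le_one_iff.2
    (neg_nonpos.2 (div_nonneg (lmax_nonneg P F1 hy) (hT1pos _).le))
  have hedge : ∀ u, s ≤ u → u < s + n → ∀ z z', 0 < P z' z →
      c * e ≤ Gpimc P g F0 F1 T0 T1 u z' z := fun u _ hu z z' hz =>
    calc c * e ≤ wmin P * g 1 * Real.exp (-(Lmax P F0 / T0)) * Real.exp (-(Lmax P F1 / T1 u)) :=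
          mul_le_mul (min_le_right _ _) (he u hu.le) (Real.exp_pos _).le (by positivity)
    _ = wmin P * g 1 * Real.exp (-(Lmax P F0 / T0 + Lmax P F1 / T1 u)) := by
          rw [neg_add, Real.exp_add, mul_assoc]
    _ ≤ _ := wmin_mul_exp_le_gpimc F0 F1 T0 T1 hP hg hT0 (hT1pos u) hz
  have hloop : ∀ u, s ≤ u → u < s + n → c * e ≤ Gpimc P g F0 F1 T0 T1 u x0 x0 :=
    fun u hu _ => (mul_le_of_le_one_right hc.le he1).trans
      ((min_le_left _ _).trans (hT u (hs.trans hu)))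
  calc c ^ n * Real.exp (-(n * Lmax P F1 / T1 (s + n))) = (c * e) ^ n := by
        rw [mul_pow, ← Real.exp_nat_mul]
        ring_nf
  _ ≤ _ := pow_le_prodG_apply_of_reachIn (isStochastic_gpimc F0 F1 T0 T1 hP hg)
        (mul_nonneg hc.le (Real.exp_pos _).le) hreach hd hedge hloop

end Minorization

lemma inv_le_exp_neg_div {m τ y : ℝ} (hτ : 0 < τ) (hy : 1 < y) (h : m / Real.log y ≤ τ) :
    y⁻¹ ≤ Real.exp (-(m / τ)) := by
  have hlog := Real.log_pos hy
  rw [← Real.exp_log (zero_lt_one.trans hy), ← Real.exp_neg]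
  refine Real.exp_le_exp.2 (neg_le_neg ?_)
  rw [div_le_iff₀ hτ]
  rw [div_le_iff₀ hlog] at h
  linarith

lemma tendsto_sum_div_linear_atTop {C : ℝ} (hC : 0 < C) (a R : ℕ) :
    Tendsto (fun K => ∑ k ∈ Finset.range K, C / (((a + k * R + R : ℕ) : ℝ) + 2))
      atTop atTop := by
  refine (not_summable_iff_tendsto_nat_atTop_of_nonneg fun k => by positivity).1 fun hsum => ?_
  have hD : (0 : ℝ) < a + R + 2 := by positivity
  refine Real.not_summable_one_div_natCast ((summable_nat_add_iff 1).1 ?_)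
  refine (summable_mul_left_iff (div_pos hC hD).ne').1
    (hsum.of_nonneg_of_le (fun k => by positivity) fun k => ?_)
  rw [mul_one_div, div_div]
  refine div_le_div_of_nonneg_left hC.le (by positivity) ?_
  push_cast
  nlinarith [(Nat.cast_nonneg k : (0 : ℝ) ≤ k), (Nat.cast_nonneg a : (0 : ℝ) ≤ a),
    (Nat.cast_nonneg R : (0 : ℝ) ≤ R)]

theorem pimc_stronglyErgodic_general
    {S : Type*} [Fintype S] [DecidableEq S]
    (P : S → S → ℝ) (hP : IsGenProb P)
    (g : ℝ → ℝ) (hg : IsAcceptFn g) (hg1 : 0 < g 1)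
    (F0 F1 : S → ℝ) (T0 : ℝ) (hT0 : 0 < T0)
    (T1 : ℕ → ℝ) (hT1pos : ∀ t, 0 < T1 t) (hT1anti : Antitone T1)
    (hT1lim : Tendsto T1 atTop (nhds 0))
    (hne : ∃ x : S, x ∉ Sm P F1)
    (hsched : ∀ t : ℕ, T1 t ≥ (Rnum P F1 : ℝ) * Lmax P F1 / Real.log ((t : ℝ) + 2)) :
    StronglyErgodicTo (Gpimc P g F0 F1 T0 T1) (rLimit F0 F1 T0) := by
  obtain ⟨x0, hx0, hreach⟩ := exists_reachIn_le_rnum hP hne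
  have : Nonempty S := ⟨x0⟩
  set R := Rnum P F1
  obtain ⟨c, hc, T, hblock⟩ :=
    exists_pow_mul_exp_le_prodG_gpimc F0 F1 T0 T1 hP hg hg1 hT0 hT1pos hT1anti hT1lim hx0 R
  have hG := isStochastic_gpimc F0 F1 T0 T1 hP hg
  have hweak : WeaklyErgodic (Gpimc P g F0 F1 T0 T1) := by
    refine weaklyErgodic_of_minorization hG (T := T) (x0 := fun _ => x0)
      (δ := fun s => c ^ R / (((s + R : ℕ) : ℝ) + 2)) (fun s hs x => ?_)
      fun a _ => tendsto_sum_div_linear_atTop (pow_pos hc R) a R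
    obtain ⟨d, hd, hdx⟩ := hreach x
    rw [div_eq_mul_inv]
    exact (mul_le_mul_of_nonneg_left (inv_le_exp_neg_div (hT1pos _)
      (lt_add_of_nonneg_of_lt (Nat.cast_nonneg _) one_lt_two)
      (hsched (s + R))) (pow_pos hc R).le).trans (hblock s hs x d hd hdx)
  exact stronglyErgodicTo_of_weaklyErgodic hG hweak (qB_isProbVec F0 F1 T0 T1)
    (gpimc_mulVec_qB F0 F1 T0 T1 hP hg) (summable_dist1_qB F0 F1 T0 hT1pos hT1anti hT1lim)
    (tendsto_dist1_qB_rLimit F0 F1 T0 hT1pos hT1lim)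

/-- Theorem 3: strong ergodicity of QA-PIMC.  Under the annealing
schedule `T1(t) ≥ R L1 / log (t+2)` the chain is strongly ergodic, with limiting
distribution supported on the global minima of `F1`, where it is proportional to
`exp (-F0 x / T0)`. -/
theorem pimc_stronglyErgodic
    {S : Type*} [Fintype S] [DecidableEq S] [Nonempty S]
    (P : S → S → ℝ) (hP : IsGenProb P)
    (g : ℝ → ℝ) (hg : IsAcceptFn g) (hg1 : 0 < g 1)
    (F0 F1 : S → ℝ) (T0 : ℝ) (hT0 : 0 < T0)
    (T1 : ℕ → ℝ) (hT1pos : ∀ t, 0 < T1 t) (hT1anti : Antitone T1)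
    (hT1lim : Tendsto T1 atTop (nhds 0))
    (hne : ∃ x : S, x ∉ Sm P F1) (hL1 : 0 < Lmax P F1)
    (hsched : ∀ t : ℕ, T1 t ≥ (Rnum P F1 : ℝ) * Lmax P F1 / Real.log ((t : ℝ) + 2)) :
    StronglyErgodicTo (Gpimc P g F0 F1 T0 T1) (rLimit F0 F1 T0) :=
  pimc_stronglyErgodic_general P hP g hg hg1 F0 F1 T0 hT0 T1 hT1pos hT1anti hT1lim hne hsched

end QAPaper
end

section
/- For the time-dependent Boltzmann distribution q(x;t) of path-integral Monte Carlo quantum annealing, for every t ≥ 0 and every state x in the set S1^min of global minima of F1, one has q(x;t+1) ≥ q(x;t). -/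
open Finset Filter

namespace QAPaper

variable {S : Type*}

/-- The time-dependent Boltzmann distribution is nondecreasing in
time at every global minimum of `F1`. -/
theorem qB_monotone_on_S1min
    {S : Type*} [Fintype S] [Nonempty S]
    (F0 F1 : S → ℝ) (T0 : ℝ) (hT0 : 0 < T0)
    (T1 : ℕ → ℝ) (hT1pos : ∀ t, 0 < T1 t) (hT1anti : Antitone T1)
    (hT1lim : Tendsto T1 atTop (nhds 0)) :
    ∀ t : ℕ, ∀ x ∈ S1min F1,
      qB F0 F1 T0 T1 (t + 1) x ≥ qB F0 F1 T0 T1 t x := by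
  intro t x hx
  have hZpos : ∀ s : ℕ, 0 < Zfun F0 F1 T0 T1 s := fun s =>
    Finset.sum_pos (fun y _ => Real.exp_pos _) Finset.univ_nonempty
  unfold qB
  rw [ge_iff_le, div_le_div_iff₀ (hZpos t) (hZpos (t + 1))]
  unfold Zfun
  rw [Finset.mul_sum, Finset.mul_sum]
  apply Finset.sum_le_sum
  intro y _
  rw [← Real.exp_add, ← Real.exp_add]
  apply Real.exp_le_exp.2
  have h1 : F1 x ≤ F1 y := hx y
  have hT : T1 (t + 1) ≤ T1 t := hT1anti (Nat.le_succ t)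
  have hinv : 1 / T1 t ≤ 1 / T1 (t + 1) :=
    one_div_le_one_div_of_le (hT1pos (t + 1)) hT
  have key := mul_le_mul_of_nonneg_left hinv (sub_nonneg.2 h1)
  have e1 : F1 x / T1 t = F1 x * (1 / T1 t) := by ring
  have e2 : F1 x / T1 (t + 1) = F1 x * (1 / T1 (t + 1)) := by ring
  have e3 : F1 y / T1 t = F1 y * (1 / T1 t) := by ring
  have e4 : F1 y / T1 (t + 1) = F1 y * (1 / T1 (t + 1)) := by ring
  nlinarith [key]

end QAPaper
end

section
/- For the time-dependent Boltzmann distribution q(x;t) of path-integral Monte Carlo quantum annealing, there exists t1 > 0 such that for all t ≥ t1 and every state x ∉ S1^min (x not a global minimum of F1), one has q(x;t+1) ≤ q(x;t). -/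
open Finset Filter

namespace QAPaper

variable {S : Type*}

/-- Auxiliary: monotonicity of `β ↦ ∑ c y * exp (β * d y)` given nonnegative
"derivative" at the left endpoint. -/
lemma aux_sum_exp_mono {S : Type*} [Fintype S] (c d : S → ℝ) (hc : ∀ y, 0 ≤ c y)
    {β β' : ℝ} (h1 : β ≤ β')
    (h2 : 0 ≤ ∑ y, c y * (d y * Real.exp (β * d y))) :
    ∑ y, c y * Real.exp (β * d y) ≤ ∑ y, c y * Real.exp (β' * d y) := by
  have key : ∀ y : S,
      c y * Real.exp (β * d y) + (β' - β) * (c y * (d y * Real.exp (β * d y)))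
        ≤ c y * Real.exp (β' * d y) := by
    intro y
    have h := Real.add_one_le_exp ((β' - β) * d y)
    have hexp : Real.exp (β' * d y) = Real.exp (β * d y) * Real.exp ((β' - β) * d y) := by
      rw [← Real.exp_add]; ring_nf
    calc c y * Real.exp (β * d y) + (β' - β) * (c y * (d y * Real.exp (β * d y)))
        = c y * Real.exp (β * d y) * ((β' - β) * d y + 1) := by ring
      _ ≤ c y * Real.exp (β * d y) * Real.exp ((β' - β) * d y) := by
          apply mul_le_mul_of_nonneg_left h
          exact mul_nonneg (hc y) (Real.exp_pos _).le
      _ = c y * Real.exp (β' * d y) := by rw [hexp]; ring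
  have hsum : ∑ y, (c y * Real.exp (β * d y)
      + (β' - β) * (c y * (d y * Real.exp (β * d y))))
      ≤ ∑ y, c y * Real.exp (β' * d y) :=
    Finset.sum_le_sum (fun y _ => key y)
  rw [Finset.sum_add_distrib, ← Finset.mul_sum] at hsum
  have hnn := mul_nonneg (sub_nonneg.mpr h1) h2
  linarith

/-- Auxiliary: eventual nonnegativity of `∑ c y * d y * exp (β * d y)` when some
`d y₀` is positive. -/
lemma aux_g_nonneg {S : Type*} [Fintype S] (c d : S → ℝ) (hc : ∀ y, 0 < c y)
    (y₀ : S) (hD : 0 < d y₀) :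
    ∃ B : ℝ, ∀ β ≥ B, 0 ≤ ∑ y, c y * (d y * Real.exp (β * d y)) := by
  classical
  set C : ℝ := ∑ y, c y * |d y| with hC
  refine ⟨max 0 (C / (c y₀ * d y₀ * d y₀)), fun β hβ => ?_⟩
  have hβ0 : 0 ≤ β := le_trans (le_max_left _ _) hβ
  have hβC : C / (c y₀ * d y₀ * d y₀) ≤ β := le_trans (le_max_right _ _) hβ
  have hden : 0 < c y₀ * d y₀ * d y₀ := mul_pos (mul_pos (hc y₀) hD) hD
  have hCle : C ≤ β * (c y₀ * d y₀ * d y₀) := by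
    rw [div_le_iff₀ hden] at hβC; linarith
  -- lower bound for each term
  have hterm : ∀ y : S, -(c y * |d y|) ≤ c y * (d y * Real.exp (β * d y)) := by
    intro y
    rcases le_or_gt 0 (d y) with h | h
    · have h1 : 0 ≤ c y * (d y * Real.exp (β * d y)) :=
        mul_nonneg (hc y).le (mul_nonneg h (Real.exp_pos _).le)
      have h2 : 0 ≤ c y * |d y| := mul_nonneg (hc y).le (abs_nonneg _)
      linarith
    · have habs : |d y| = -(d y) := abs_of_neg h
      have hle : Real.exp (β * d y) ≤ 1 := by
        rw [Real.exp_le_one_iff]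
        exact mul_nonpos_of_nonneg_of_nonpos hβ0 h.le
      have : d y * 1 ≤ d y * Real.exp (β * d y) := by
        apply mul_le_mul_of_nonpos_left hle h.le
      have := mul_le_mul_of_nonneg_left this (hc y).le
      rw [habs]; nlinarith
  -- the term at y₀ dominates
  have hy₀ : C ≤ c y₀ * (d y₀ * Real.exp (β * d y₀)) := by
    have h1 : β * d y₀ ≤ Real.exp (β * d y₀) := by
      have := Real.add_one_le_exp (β * d y₀); linarith
    calc C ≤ β * (c y₀ * d y₀ * d y₀) := hCle
      _ = c y₀ * (d y₀ * (β * d y₀)) := by ring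
      _ ≤ c y₀ * (d y₀ * Real.exp (β * d y₀)) := by
          apply mul_le_mul_of_nonneg_left _ (hc y₀).le
          exact mul_le_mul_of_nonneg_left h1 hD.le
  -- sum over the rest
  have hrest : -C ≤ ∑ y ∈ Finset.univ.erase y₀, c y * (d y * Real.exp (β * d y)) := by
    have h1 : ∑ y ∈ Finset.univ.erase y₀, -(c y * |d y|)
        ≤ ∑ y ∈ Finset.univ.erase y₀, c y * (d y * Real.exp (β * d y)) :=
      Finset.sum_le_sum (fun y _ => hterm y)
    have h2 : ∑ y ∈ Finset.univ.erase y₀, (c y * |d y|) ≤ C := by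
      rw [hC]
      apply Finset.sum_le_sum_of_subset_of_nonneg (Finset.erase_subset _ _)
      intro y _ _; exact mul_nonneg (hc y).le (abs_nonneg _)
    rw [Finset.sum_neg_distrib] at h1
    linarith
  have hsplit : ∑ y, c y * (d y * Real.exp (β * d y))
      = (∑ y ∈ Finset.univ.erase y₀, c y * (d y * Real.exp (β * d y)))
        + c y₀ * (d y₀ * Real.exp (β * d y₀)) :=
    (Finset.sum_erase_add _ _ (Finset.mem_univ y₀)).symm
  rw [hsplit]
  linarith

/-- There is a time `t1 > 0` after which the time-dependent
Boltzmann distribution is nonincreasing at every state that is not a global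
minimum of `F1`. -/
theorem qB_antitone_off_S1min
    {S : Type*} [Fintype S] [Nonempty S]
    (F0 F1 : S → ℝ) (T0 : ℝ) (hT0 : 0 < T0)
    (T1 : ℕ → ℝ) (hT1pos : ∀ t, 0 < T1 t) (hT1anti : Antitone T1)
    (hT1lim : Tendsto T1 atTop (nhds 0)) :
    ∃ t1 : ℕ, 0 < t1 ∧ ∀ t : ℕ, t ≥ t1 → ∀ x : S, x ∉ S1min F1 →
      qB F0 F1 T0 T1 (t + 1) x ≤ qB F0 F1 T0 T1 t x := by
  classical
  set c : S → S → ℝ := fun x y => Real.exp ((F0 x - F0 y) / T0) with hc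
  set d : S → S → ℝ := fun x y => F1 x - F1 y with hd
  have hcpos : ∀ x y, 0 < c x y := fun x y => Real.exp_pos _
  -- rewrite `qB` as the inverse of `∑ y, c x y * exp (β t * d x y)`
  have hq : ∀ t x, qB F0 F1 T0 T1 t x
      = (∑ y, c x y * Real.exp ((T1 t)⁻¹ * d x y))⁻¹ := by
    intro t x
    have hT1ne : T1 t ≠ 0 := (hT1pos t).ne'
    have h1 : ∀ y : S, c x y * Real.exp ((T1 t)⁻¹ * d x y)
        = Real.exp (-(F0 y) / T0 - F1 y / T1 t) / Real.exp (-(F0 x) / T0 - F1 x / T1 t) := by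
      intro y
      rw [hc, hd, ← Real.exp_add, ← Real.exp_sub]
      congr 1
      field_simp
      ring
    unfold qB Zfun
    simp_rw [h1]
    rw [← Finset.sum_div, inv_div]
  -- positivity of the sums
  have hfpos : ∀ (β : ℝ) (x : S), 0 < ∑ y, c x y * Real.exp (β * d x y) := by
    intro β x
    apply Finset.sum_pos _ Finset.univ_nonempty
    intro y _; positivity
  -- choose thresholds
  have hBx : ∀ x : S, ∃ B : ℝ, x ∉ S1min F1 →
      ∀ β ≥ B, 0 ≤ ∑ y, c x y * (d x y * Real.exp (β * d x y)) := by
    intro x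
    by_cases hx : x ∈ S1min F1
    · exact ⟨0, fun h => absurd hx h⟩
    · have : ∃ y, F1 y < F1 x := by
        by_contra h
        push_neg at h
        exact hx (fun y => h y)
      obtain ⟨y₀, hy₀⟩ := this
      have hD : 0 < d x y₀ := by rw [hd]; simp; linarith
      obtain ⟨B, hB⟩ := aux_g_nonneg (c x) (d x) (hcpos x) y₀ hD
      exact ⟨B, fun _ => hB⟩
  choose Bfun hBfun using hBx
  set Bmax : ℝ := Finset.univ.sup' Finset.univ_nonempty Bfun with hBmax
  set A : ℝ := max Bmax 1 with hA
  have hApos : 0 < A := lt_of_lt_of_le one_pos (le_max_right _ _)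
  -- eventually `T1 t < A⁻¹`
  have hev : ∀ᶠ t in atTop, T1 t < A⁻¹ := by
    have : (0 : ℝ) < A⁻¹ := by positivity
    exact hT1lim.eventually (eventually_lt_nhds this)
  obtain ⟨t1', ht1'⟩ := eventually_atTop.mp hev
  refine ⟨max t1' 1, lt_of_lt_of_le one_pos (le_max_right _ _), ?_⟩
  intro t ht x hx
  have htt1' : t ≥ t1' := le_trans (le_max_left _ _) ht
  -- β values
  have hβt : A < (T1 t)⁻¹ := by
    have h1 : T1 t < A⁻¹ := ht1' t htt1'
    rwa [lt_inv_comm₀ (hT1pos t) hApos] at h1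
  have hβB : Bfun x ≤ (T1 t)⁻¹ := by
    have h1 : Bfun x ≤ Bmax := Finset.le_sup' _ (Finset.mem_univ x)
    have h2 : Bmax ≤ A := le_max_left _ _
    linarith
  have hβle : (T1 t)⁻¹ ≤ (T1 (t + 1))⁻¹ := by
    have := hT1anti (Nat.le_succ t)
    exact inv_anti₀ (hT1pos (t + 1)) this
  have hg := hBfun x hx ((T1 t)⁻¹) hβB
  have hmono := aux_sum_exp_mono (c x) (d x) (fun y => (hcpos x y).le) hβle hg
  rw [hq t x, hq (t + 1) x]
  exact inv_anti₀ (hfpos _ x) hmono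

end QAPaper
end

section
/- For the time-dependent Boltzmann distribution q(·;t) of path-integral Monte Carlo quantum annealing, the total variation increments are summable: Σ_{t=0}^∞ ‖q(·;t+1) − q(·;t)‖ < ∞, where ‖p‖ = Σ_{x∈S} |p(x)|. In particular, there exists t1 such that for all t ≥ t1, ‖q(·;t+1) − q(·;t)‖ = 2 Σ_{x∈S1^min} (q(x;t+1) − q(x;t)). -/
open Finset Filter

namespace QAPaper

variable {S : Type*}

set_option maxHeartbeats 3200000 in
/-- The total-variation increments of the time-dependent Boltzmann
distribution are summable; in particular, eventually
`‖q(·;t+1) - q(·;t)‖ = 2 ∑_{x ∈ S1min} (q(x;t+1) - q(x;t))`. -/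
theorem qB_increments_summable
    {S : Type*} [Fintype S] [Nonempty S]
    (F0 F1 : S → ℝ) (T0 : ℝ) (hT0 : 0 < T0)
    (T1 : ℕ → ℝ) (hT1pos : ∀ t, 0 < T1 t) (hT1anti : Antitone T1)
    (hT1lim : Tendsto T1 atTop (nhds 0)) :
    (Summable fun t => dist1 (qB F0 F1 T0 T1 (t + 1)) (qB F0 F1 T0 T1 t)) ∧
      ∃ t1 : ℕ, ∀ t : ℕ, t ≥ t1 →
        dist1 (qB F0 F1 T0 T1 (t + 1)) (qB F0 F1 T0 T1 t) =
          2 * ∑ x ∈ Finset.univ.filter (fun x => ∀ y, F1 x ≤ F1 y),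
            (qB F0 F1 T0 T1 (t + 1) x - qB F0 F1 T0 T1 t x) := by
  classical
  obtain ⟨x0, -, hx0⟩ := Finset.exists_min_image Finset.univ F1 Finset.univ_nonempty
  set m : ℝ := F1 x0 with hmdef
  set a : S → ℝ := fun x => Real.exp (-(F0 x) / T0) with hadef
  set Δ : S → ℝ := fun x => F1 x - m with hΔdef
  set sc : ℕ → ℝ := fun t => (T1 t)⁻¹ with hscdef
  set D : ℝ → ℝ := fun s => ∑ y, a y * Real.exp (-(Δ y * s)) with hDdef
  set Q : ℝ → S → ℝ := fun s x => a x * Real.exp (-(Δ x * s)) / D s with hQdef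
  have ha_pos : ∀ x, 0 < a x := fun x => Real.exp_pos _
  have hΔ_nonneg : ∀ x, 0 ≤ Δ x := fun x => sub_nonneg.2 (hx0 x (Finset.mem_univ x))
  have hΔx0 : Δ x0 = 0 := by simp [hΔdef, hmdef]
  have hmin_iff : ∀ x, (∀ y, F1 x ≤ F1 y) ↔ Δ x = 0 := by
    intro x
    constructor
    · intro h
      have h1 : F1 x ≤ m := h x0
      have h2 : m ≤ F1 x := hx0 x (Finset.mem_univ x)
      simp [hΔdef]; linarith
    · intro h y
      have : F1 x = m := by simpa [hΔdef, sub_eq_zero] using h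
      rw [this]; exact hx0 y (Finset.mem_univ y)
  have hD_pos : ∀ s, 0 < D s := by
    intro s
    exact Finset.sum_pos (fun y _ => mul_pos (ha_pos y) (Real.exp_pos _)) Finset.univ_nonempty
  have hq_eq : ∀ t x, qB F0 F1 T0 T1 t x = Q (sc t) x := by
    intro t x
    have hkey : ∀ z : S, a z * Real.exp (-(Δ z * sc t)) =
        Real.exp (-(F0 z) / T0 - F1 z / T1 t) * Real.exp (m * sc t) := by
      intro z
      simp only [hadef, hΔdef, hscdef]
      rw [← Real.exp_add, ← Real.exp_add]
      congr 1
      rw [div_eq_mul_inv (F1 z)]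
      ring
    have hDt : D (sc t) = Zfun F0 F1 T0 T1 t * Real.exp (m * sc t) := by
      simp only [hDdef, Zfun]
      rw [Finset.sum_mul]
      exact Finset.sum_congr rfl fun z _ => hkey z
    simp only [hQdef, qB]
    rw [hDt, hkey x, mul_div_mul_right _ _ (Real.exp_ne_zero _)]
  have hQsum : ∀ s, ∑ x, Q s x = 1 := by
    intro s
    simp only [hQdef]
    rw [← Finset.sum_div]
    rw [show ∑ y, a y * Real.exp (-(Δ y * s)) = D s from rfl]
    exact div_self (hD_pos s).ne'
  have hQ_nonneg : ∀ s x, 0 ≤ Q s x := by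
    intro s x
    exact div_nonneg (mul_nonneg (ha_pos x).le (Real.exp_pos _).le) (hD_pos s).le
  have hQ_le_one : ∀ s x, Q s x ≤ 1 := by
    intro s x
    rw [← hQsum s]
    exact Finset.single_le_sum (fun y _ => hQ_nonneg s y) (Finset.mem_univ x)
  have hsc_mono : ∀ {t t' : ℕ}, t ≤ t' → sc t ≤ sc t' := by
    intro t t' h
    simp only [hscdef]
    exact inv_anti₀ (hT1pos t') (hT1anti h)
  have hmono : ∀ x, Δ x = 0 → ∀ {s s' : ℝ}, s ≤ s' → Q s x ≤ Q s' x := by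
    intro x hx s s' hss'
    have hDle : D s' ≤ D s := by
      apply Finset.sum_le_sum
      intro y _
      apply mul_le_mul_of_nonneg_left _ (ha_pos y).le
      apply Real.exp_le_exp.2
      have := mul_le_mul_of_nonneg_left hss' (hΔ_nonneg y)
      linarith
    simp only [hQdef, hx, zero_mul, neg_zero, Real.exp_zero, mul_one]
    exact div_le_div_of_nonneg_left (ha_pos x).le (hD_pos s') hDle
  have hanti : ∃ s0 : ℝ, ∀ x, Δ x ≠ 0 → ∀ s s' : ℝ, s0 ≤ s → s ≤ s' → Q s' x ≤ Q s x := by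
    by_cases hP : (Finset.univ.filter fun y : S => Δ y ≠ 0).Nonempty
    · set P := Finset.univ.filter fun y : S => Δ y ≠ 0 with hPdef
      set δ := P.inf' hP Δ with hδdef
      set M := P.sup' hP Δ with hMdef
      have hδpos : 0 < δ := by
        rw [hδdef, Finset.lt_inf'_iff]
        intro y hy
        exact (hΔ_nonneg y).lt_of_ne (Ne.symm (Finset.mem_filter.1 hy).2)
      have hδM : δ ≤ M := by
        obtain ⟨b, hb⟩ := hP
        exact le_trans (Finset.inf'_le _ hb) (Finset.le_sup' _ hb)
      have hMpos : 0 < M := lt_of_lt_of_le hδpos hδM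
      have hεpos : 0 < a x0 * (δ / M) := mul_pos (ha_pos x0) (div_pos hδpos hMpos)
      have htend : Tendsto (fun s : ℝ => ∑ y ∈ P, a y * Real.exp (-(Δ y * s))) atTop (nhds 0) := by
        have : Tendsto (fun s : ℝ => ∑ y ∈ P, a y * Real.exp (-(Δ y * s))) atTop
            (nhds (∑ y ∈ P, a y * 0)) := by
          apply tendsto_finset_sum
          intro y hy
          have hΔy : 0 < Δ y := (hΔ_nonneg y).lt_of_ne (Ne.symm (Finset.mem_filter.1 hy).2)
          have h1 : Tendsto (fun s : ℝ => -(Δ y * s)) atTop atBot := by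
            apply Filter.tendsto_neg_atTop_atBot.comp
            exact Tendsto.const_mul_atTop hΔy tendsto_id
          exact (Real.tendsto_exp_atBot.comp h1).const_mul (a y)
        simpa using this
      obtain ⟨s0, hs0⟩ := eventually_atTop.1 (htend.eventually_lt_const hεpos)
      refine ⟨s0, fun x hΔx s s' hs hss' => ?_⟩
      have hΔxpos : 0 < Δ x := (hΔ_nonneg x).lt_of_ne (Ne.symm hΔx)
      have hxP : x ∈ P := Finset.mem_filter.2 ⟨Finset.mem_univ x, hΔx⟩
      have hδx : δ ≤ Δ x := Finset.inf'_le _ hxP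
      have hh : 0 ≤ s' - s := sub_nonneg.2 hss'
      simp only [hQdef]
      rw [div_le_div_iff₀ (hD_pos s') (hD_pos s), mul_assoc, mul_assoc]
      refine mul_le_mul_of_nonneg_left ?_ (ha_pos x).le
      set T : S → ℝ := fun y =>
        a y * (Real.exp (-(Δ x * s')) * Real.exp (-(Δ y * s)) -
          Real.exp (-(Δ x * s)) * Real.exp (-(Δ y * s'))) with hTdef
      have hexpand : Real.exp (-(Δ x * s')) * D s - Real.exp (-(Δ x * s)) * D s' = ∑ y, T y := by
        simp only [hTdef, hDdef, Finset.mul_sum, ← Finset.sum_sub_distrib]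
        exact Finset.sum_congr rfl fun y _ => by ring
      have hc_nonneg : 0 ≤ 1 - Real.exp (-(M * (s' - s))) := by
        have : Real.exp (-(M * (s' - s))) ≤ Real.exp 0 := by
          apply Real.exp_le_exp.2; nlinarith
        rw [Real.exp_zero] at this; linarith
      have hterm : ∀ y ∈ P, T y ≤ (a y * Real.exp (-(Δ y * s))) *
          (Real.exp (-(Δ x * s)) * (1 - Real.exp (-(M * (s' - s))))) := by
        intro y hy
        have hyM : Δ y ≤ M := Finset.le_sup' _ hy
        have hΔy : 0 ≤ Δ y := hΔ_nonneg y
        have e1 : Real.exp (-(Δ x * s')) = Real.exp (-(Δ x * s)) * Real.exp (-(Δ x * (s' - s))) := by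
          rw [← Real.exp_add]; congr 1; ring
        have e2 : Real.exp (-(Δ y * s')) = Real.exp (-(Δ y * s)) * Real.exp (-(Δ y * (s' - s))) := by
          rw [← Real.exp_add]; congr 1; ring
        have f1 : Real.exp (-(Δ x * (s' - s))) ≤ 1 := by
          rw [← Real.exp_zero]; apply Real.exp_le_exp.2; nlinarith
        have f2 : Real.exp (-(M * (s' - s))) ≤ Real.exp (-(Δ y * (s' - s))) := by
          apply Real.exp_le_exp.2; nlinarith
        have hpx : 0 < Real.exp (-(Δ x * s)) := Real.exp_pos _
        have hpy : 0 < Real.exp (-(Δ y * s)) := Real.exp_pos _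
        simp only [hTdef]
        rw [e1, e2]
        nlinarith [mul_pos (mul_pos (ha_pos y) hpx) hpy]
      have B1 : ∑ y ∈ P, T y ≤ (a x0 * (δ / M)) *
          (Real.exp (-(Δ x * s)) * (1 - Real.exp (-(M * (s' - s))))) := by
        calc ∑ y ∈ P, T y
            ≤ ∑ y ∈ P, (a y * Real.exp (-(Δ y * s))) *
              (Real.exp (-(Δ x * s)) * (1 - Real.exp (-(M * (s' - s))))) :=
              Finset.sum_le_sum hterm
          _ = (∑ y ∈ P, a y * Real.exp (-(Δ y * s))) *
              (Real.exp (-(Δ x * s)) * (1 - Real.exp (-(M * (s' - s))))) := by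
              rw [← Finset.sum_mul]
          _ ≤ (a x0 * (δ / M)) *
              (Real.exp (-(Δ x * s)) * (1 - Real.exp (-(M * (s' - s))))) := by
              apply mul_le_mul_of_nonneg_right (hs0 s hs).le
              exact mul_nonneg (Real.exp_pos _).le hc_nonneg
      have hx0mem : x0 ∈ Finset.univ.filter (fun y : S => ¬ Δ y ≠ 0) := by
        simp [hΔx0]
      have hTy0 : ∀ y ∈ Finset.univ.filter (fun y : S => ¬ Δ y ≠ 0),
          T y = a y * (Real.exp (-(Δ x * s')) - Real.exp (-(Δ x * s))) := by
        intro y hy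
        have hy0 : Δ y = 0 := not_not.1 (Finset.mem_filter.1 hy).2
        simp only [hTdef, hy0, zero_mul, neg_zero, Real.exp_zero, mul_one]
      have hneg : Real.exp (-(Δ x * s')) - Real.exp (-(Δ x * s)) ≤ 0 := by
        have : Real.exp (-(Δ x * s')) ≤ Real.exp (-(Δ x * s)) := by
          apply Real.exp_le_exp.2; nlinarith
        linarith
      have B2 : ∑ y ∈ Finset.univ.filter (fun y : S => ¬ Δ y ≠ 0), T y ≤
          a x0 * (Real.exp (-(Δ x * s')) - Real.exp (-(Δ x * s))) := by
        rw [Finset.sum_congr rfl hTy0]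
        rw [← Finset.add_sum_erase _ _ hx0mem]
        have : ∑ y ∈ (Finset.univ.filter (fun y : S => ¬ Δ y ≠ 0)).erase x0,
            a y * (Real.exp (-(Δ x * s')) - Real.exp (-(Δ x * s))) ≤ 0 :=
          Finset.sum_nonpos fun y _ => mul_nonpos_of_nonneg_of_nonpos (ha_pos y).le hneg
        linarith
      have key : δ / M * (1 - Real.exp (-(M * (s' - s)))) ≤ 1 - Real.exp (-(δ * (s' - s))) := by
        have hlam0 : 0 ≤ δ / M := (div_pos hδpos hMpos).le
        have hlam1 : δ / M ≤ 1 := (div_le_one hMpos).2 hδM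
        have hcx := convexOn_exp.2 (Set.mem_univ (-(M * (s' - s)))) (Set.mem_univ (0 : ℝ))
          hlam0 (sub_nonneg.2 hlam1) (by ring)
        have hsm : (δ / M) • (-(M * (s' - s))) + (1 - δ / M) • (0 : ℝ) = -(δ * (s' - s)) := by
          simp only [smul_eq_mul, mul_zero, add_zero]
          field_simp
        rw [hsm] at hcx
        simp only [smul_eq_mul, Real.exp_zero, mul_one] at hcx
        linarith
      have hux : Real.exp (-(Δ x * (s' - s))) ≤ Real.exp (-(δ * (s' - s))) := by
        apply Real.exp_le_exp.2; nlinarith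
      have e1 : Real.exp (-(Δ x * s')) = Real.exp (-(Δ x * s)) * Real.exp (-(Δ x * (s' - s))) := by
        rw [← Real.exp_add]; congr 1; ring
      have final : ∑ y, T y ≤ 0 := by
        rw [← Finset.sum_filter_add_sum_filter_not Finset.univ (fun y : S => Δ y ≠ 0) T]
        have hcomb := add_le_add B1 B2
        have hpx : 0 < Real.exp (-(Δ x * s)) := Real.exp_pos _
        have hbound : (a x0 * (δ / M)) *
            (Real.exp (-(Δ x * s)) * (1 - Real.exp (-(M * (s' - s))))) +
            a x0 * (Real.exp (-(Δ x * s')) - Real.exp (-(Δ x * s))) ≤ 0 := by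
          rw [e1]
          nlinarith [mul_pos (ha_pos x0) hpx, key, hux]
        linarith
      linarith [final, hexpand]
    · exact ⟨0, fun x hx s s' _ _ =>
        absurd (Finset.mem_filter.2 ⟨Finset.mem_univ x, hx⟩) fun h => hP ⟨x, h⟩⟩
  obtain ⟨s0, hs0anti⟩ := hanti
  have hsc_tend : Tendsto sc atTop atTop := by
    have h1 : Tendsto T1 atTop (nhdsWithin (0:ℝ) (Set.Ioi 0)) :=
      tendsto_nhdsWithin_iff.2 ⟨hT1lim, Filter.Eventually.of_forall hT1pos⟩
    exact tendsto_inv_nhdsGT_zero.comp h1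
  obtain ⟨t1, ht1⟩ := eventually_atTop.1 (hsc_tend.eventually_ge_atTop s0)
  constructor
  · have hrw : (fun t => dist1 (qB F0 F1 T0 T1 (t + 1)) (qB F0 F1 T0 T1 t)) =
        fun t => ∑ x, |Q (sc (t + 1)) x - Q (sc t) x| := by
      funext t
      simp only [dist1, hq_eq]
    rw [hrw]
    apply summable_sum
    intro x _
    by_cases hx : Δ x = 0
    · apply summable_of_sum_range_le (c := 1) (fun n => abs_nonneg _)
      intro n
      have habs : ∀ t, |Q (sc (t + 1)) x - Q (sc t) x| = Q (sc (t + 1)) x - Q (sc t) x :=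
        fun t => abs_of_nonneg (sub_nonneg.2 (hmono x hx (hsc_mono (Nat.le_succ t))))
      rw [Finset.sum_congr rfl fun t _ => habs t,
        Finset.sum_range_sub (fun t => Q (sc t) x)]
      linarith [hQ_nonneg (sc 0) x, hQ_le_one (sc n) x]
    · rw [← summable_nat_add_iff t1]
      apply summable_of_sum_range_le (c := Q (sc t1) x) (fun n => abs_nonneg _)
      intro n
      have habs : ∀ k, |Q (sc (k + t1 + 1)) x - Q (sc (k + t1)) x| =
          Q (sc (k + t1)) x - Q (sc (k + 1 + t1)) x := by
        intro k
        have hle : Q (sc (k + t1 + 1)) x ≤ Q (sc (k + t1)) x :=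
          hs0anti x hx _ _ (ht1 _ (by omega)) (hsc_mono (Nat.le_succ _))
        rw [abs_of_nonpos (by linarith), neg_sub, show k + 1 + t1 = k + t1 + 1 by omega]
      rw [Finset.sum_congr rfl fun k _ => habs k,
        Finset.sum_range_sub' (fun k => Q (sc (k + t1)) x)]
      simp only [Nat.zero_add]
      linarith [hQ_nonneg (sc (n + t1)) x]
  · refine ⟨t1, fun t ht => ?_⟩
    simp only [dist1, hq_eq]
    have hdsum : ∑ x, (Q (sc (t + 1)) x - Q (sc t) x) = 0 := by
      rw [Finset.sum_sub_distrib, hQsum, hQsum, sub_self]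
    have hdmin : ∀ x, Δ x = 0 → 0 ≤ Q (sc (t + 1)) x - Q (sc t) x :=
      fun x hx => sub_nonneg.2 (hmono x hx (hsc_mono (Nat.le_succ t)))
    have hdnot : ∀ x, Δ x ≠ 0 → Q (sc (t + 1)) x - Q (sc t) x ≤ 0 :=
      fun x hx => sub_nonpos.2 (hs0anti x hx _ _ (ht1 t ht) (hsc_mono (Nat.le_succ t)))
    have hfe : Finset.univ.filter (fun x : S => ∀ y, F1 x ≤ F1 y) =
        Finset.univ.filter (fun x : S => Δ x = 0) := by
      apply Finset.filter_congr
      intro x _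
      simp [hmin_iff x]
    have h1 : ∑ x ∈ Finset.univ.filter (fun x : S => Δ x = 0),
        |Q (sc (t + 1)) x - Q (sc t) x| =
        ∑ x ∈ Finset.univ.filter (fun x : S => Δ x = 0), (Q (sc (t + 1)) x - Q (sc t) x) :=
      Finset.sum_congr rfl fun x hx => abs_of_nonneg (hdmin x (Finset.mem_filter.1 hx).2)
    have h2 : ∑ x ∈ Finset.univ.filter (fun x : S => ¬ Δ x = 0),
        |Q (sc (t + 1)) x - Q (sc t) x| =
        -∑ x ∈ Finset.univ.filter (fun x : S => ¬ Δ x = 0), (Q (sc (t + 1)) x - Q (sc t) x) := by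
      rw [← Finset.sum_neg_distrib]
      exact Finset.sum_congr rfl fun x hx => abs_of_nonpos (hdnot x (Finset.mem_filter.1 hx).2)
    have h3 : ∑ x ∈ Finset.univ.filter (fun x : S => Δ x = 0), (Q (sc (t + 1)) x - Q (sc t) x) +
        ∑ x ∈ Finset.univ.filter (fun x : S => ¬ Δ x = 0), (Q (sc (t + 1)) x - Q (sc t) x) = 0 := by
      rw [Finset.sum_filter_add_sum_filter_not]
      exact hdsum
    rw [← Finset.sum_filter_add_sum_filter_not Finset.univ (fun x : S => Δ x = 0)
      (fun x => |Q (sc (t + 1)) x - Q (sc t) x|), hfe, h1, h2]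
    linarith


end QAPaper
end

section
/- The distribution q(x;t) = w(x;t) / Σ_{y∈S} w(y;t) is the stationary distribution of the instantaneous Green's function Monte Carlo transition probability G1(·,·;t): Σ_{x∈S} G1(y,x;t) q(x;t) = q(y;t) for all y ∈ S. Moreover, if E0(x) = −Σ_{⟨ij⟩} J_ij x_i x_j (so that Σ_{x∈S} E0(x) = 0), it has the explicit form q(x;t) = 2^{−N} − Δt·E0(x) / (2^N · (1 + Δt·E_T + N·Δt·Γ(t))). -/
/-!
The weight `w(x) = c - Δt E0(x)`, with `c = 1 + Δt E_T + N Δt Γ(t)`, is in detailed balance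
with `G1`: for single-flip neighbours `G1(y,x) w(x) = Δt Γ(t)` is symmetric in `x, y`. The columns
of `G1` sum to one because every configuration has exactly `N` single-flip neighbours, so `w`,
and hence its normalization `q`, is stationary. Flipping the spin `x_i` negates `x_i x_j`, so
`∑ₓ E0(x) = 0`, hence `∑ₓ w(x) = 2^N c`, which gives the explicit form of `q`.
-/

open Finset Filter

namespace QAPaper

variable {S : Type*}

theorem mulVec_eq_self_of_detailed_balance [Fintype S] {G : Matrix S S ℝ} {q : S → ℝ}
    (hcol : ∀ x, ∑ y, G y x = 1) (hbal : ∀ x y, G y x * q x = G x y * q y) :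
    G.mulVec q = q := by
  funext y
  calc G.mulVec q y = ∑ x, G x y * q y := Finset.sum_congr rfl fun x _ => hbal x y
    _ = q y := by rw [← Finset.sum_mul, hcol, one_mul]

section SpinFlip

variable {ι : Type*} [DecidableEq ι]

def flipAt (i : ι) (x : ι → Bool) : ι → Bool := Function.update x i (!x i)

theorem flipAt_involutive (i : ι) : Function.Involutive (flipAt i) := by
  intro x
  simp [flipAt]

theorem spin_not (b : Bool) : spin (!b) = -spin b := by
  cases b <;> norm_num [spin]

theorem hammingDist_eq_one_iff [Fintype ι] {x y : ι → Bool} :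
    hammingDist x y = 1 ↔ ∃ i, flipAt i x = y := by
  have hsite : ∀ i j, (x j ≠ y j ↔ j = i) ↔ flipAt i x j = y j := by
    intro i j
    by_cases hji : j = i
    · subst hji
      cases hx : x j <;> cases hy : y j <;> simp [flipAt, hx]
    · simp [flipAt, hji]
  simp only [hammingDist, Finset.card_eq_one, Finset.ext_iff, Finset.mem_filter,
    Finset.mem_univ, true_and, Finset.mem_singleton, hsite, funext_iff]

theorem card_filter_hammingDist_eq_one [Fintype ι] (x : ι → Bool) :
    #{y | hammingDist x y = 1} = Fintype.card ι := by
  have hinj : Function.Injective fun i => flipAt i x := by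
    intro i j hij
    by_contra hne
    have := congrFun hij i
    simp [flipAt, Function.update_of_ne hne] at this
  have himage : ({y | hammingDist x y = 1} : Finset (ι → Bool)) =
      Finset.univ.image fun i => flipAt i x := by
    ext y
    simp [hammingDist_eq_one_iff]
  rw [himage, Finset.card_image_of_injective _ hinj, Finset.card_univ]

theorem sum_spin_mul_spin_eq_zero [Fintype ι] {i j : ι} (hij : i ≠ j) :
    ∑ x : ι → Bool, spin (x i) * spin (x j) = 0 := by
  have hflip : ∀ x, spin (flipAt i x i) * spin (flipAt i x j) = -(spin (x i) * spin (x j)) := by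
    intro x
    simp [flipAt, Function.update_of_ne hij.symm, spin_not]
  have := Equiv.sum_comp (flipAt_involutive i).toPerm fun x : ι → Bool => spin (x i) * spin (x j)
  simp only [Function.Involutive.coe_toPerm, hflip, Finset.sum_neg_distrib] at this
  linarith

end SpinFlip

theorem sum_E0def (N : ℕ) (J : Fin N → Fin N → ℝ) : ∑ x, E0def N J x = 0 := by
  unfold E0def
  rw [Finset.sum_neg_distrib, Finset.sum_comm, neg_eq_zero]
  refine Finset.sum_eq_zero fun p hp => ?_
  simp_rw [mul_assoc]
  rw [← Finset.mul_sum, sum_spin_mul_spin_eq_zero (Finset.mem_filter.mp hp).2.ne, mul_zero]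

theorem hamming_self (N : ℕ) (x : Fin N → Bool) : hamming N x x = 0 :=
  hammingDist_self x

theorem hamming_comm (N : ℕ) (x y : Fin N → Bool) : hamming N x y = hamming N y x :=
  hammingDist_comm x y

theorem card_filter_hamming_eq_one (N : ℕ) (x : Fin N → Bool) : #{y | hamming N x y = 1} = N :=
  (card_filter_hammingDist_eq_one x).trans (Fintype.card_fin N)

section GFMC

variable (N : ℕ) (J : Fin N → Fin N → ℝ) (Δt ET : ℝ) (Γ : ℕ → ℝ) (t : ℕ)

theorem wgt_eq_sub (x : Fin N → Bool) :
    wgt N J Δt ET Γ t x = (1 + Δt * ET + N * Δt * Γ t) - Δt * E0def N J x := by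
  unfold wgt; ring

theorem sum_wgt : ∑ x, wgt N J Δt ET Γ t x = 2 ^ N * (1 + Δt * ET + N * Δt * Γ t) := by
  simp only [wgt_eq_sub, Finset.sum_sub_distrib, ← Finset.mul_sum, sum_E0def, Finset.sum_const,
    Finset.card_univ, Fintype.card_fun, Fintype.card_bool, Fintype.card_fin, nsmul_eq_mul]
  push_cast; ring

theorem wgt_pos (hN : 0 < N) (hΔt : 0 < Δt) (hET : ∀ x, 0 ≤ 1 - Δt * (E0def N J x - ET))
    (hΓ : 0 < Γ t) (x : Fin N → Bool) : 0 < wgt N J Δt ET Γ t x := by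
  have hkin : 0 < (N : ℝ) * Δt * Γ t := by positivity
  unfold wgt
  linarith [hET x]

theorem qGFMC_eq (hc : 1 + Δt * ET + N * Δt * Γ t ≠ 0) (x : Fin N → Bool) :
    qGFMC N J Δt ET Γ t x =
      ((2 : ℝ) ^ N)⁻¹ - Δt * E0def N J x / (2 ^ N * (1 + Δt * ET + N * Δt * Γ t)) := by
  rw [qGFMC, sum_wgt, wgt_eq_sub, sub_div, div_mul_cancel_right₀ hc]

theorem sum_G1mat_apply_eq_one (x : Fin N → Bool) : ∑ y, G1mat N J Δt ET Γ t y x = 1 := by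
  set a := Δt * Γ t / wgt N J Δt ET Γ t x
  have hsplit : ∀ y, G1mat N J Δt ET Γ t y x =
      (if x = y then 1 - N * a else 0) + if hamming N x y = 1 then a else 0 := by
    intro y
    by_cases hxy : x = y
    · subst hxy
      simp [G1mat, a, hamming_self, mul_assoc, mul_div_assoc]
    · simp [G1mat, a, Ne.symm hxy, hxy]
  simp only [hsplit, Finset.sum_add_distrib, Finset.sum_ite_eq, Finset.mem_univ, if_true,
    ← Finset.sum_filter, Finset.sum_const, card_filter_hamming_eq_one, nsmul_eq_mul]
  ring

theorem G1mat_detailed_balance (hw : ∀ x, wgt N J Δt ET Γ t x ≠ 0) (x y : Fin N → Bool) :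
    G1mat N J Δt ET Γ t y x * wgt N J Δt ET Γ t x =
      G1mat N J Δt ET Γ t x y * wgt N J Δt ET Γ t y := by
  by_cases hxy : x = y
  · rw [hxy]
  · simp [G1mat, hamming_comm N y x, hxy, Ne.symm hxy, ite_mul, hw]

end GFMC

theorem gfmc_stationary_distribution_general
    (N : ℕ) (hN : 0 < N) (J : Fin N → Fin N → ℝ)
    (Δt ET : ℝ) (hΔt : 0 < Δt)
    (hET : ∀ x : Fin N → Bool, 0 ≤ 1 - Δt * (E0def N J x - ET))
    (Γ : ℕ → ℝ) (hΓpos : ∀ t, 0 < Γ t) :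
    (∀ t : ℕ, (G1mat N J Δt ET Γ t).mulVec (qGFMC N J Δt ET Γ t) = qGFMC N J Δt ET Γ t) ∧
      ∀ t : ℕ, ∀ x : Fin N → Bool,
        qGFMC N J Δt ET Γ t x =
          ((2 : ℝ) ^ N)⁻¹ -
            Δt * E0def N J x / (2 ^ N * (1 + Δt * ET + N * Δt * Γ t)) := by
  have hw : ∀ t x, 0 < wgt N J Δt ET Γ t x := fun t => wgt_pos N J Δt ET Γ t hN hΔt hET (hΓpos t)
  refine ⟨fun t => ?_, fun t => qGFMC_eq N J Δt ET Γ t ?_⟩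
  · refine mulVec_eq_self_of_detailed_balance (sum_G1mat_apply_eq_one N J Δt ET Γ t) fun x y => ?_
    simp only [qGFMC, mul_div_assoc',
      G1mat_detailed_balance N J Δt ET Γ t (fun x => (hw t x).ne') x y]
  · have hZ : 0 < 2 ^ N * (1 + Δt * ET + N * Δt * Γ t) :=
      sum_wgt N J Δt ET Γ t ▸ Finset.sum_pos (fun x _ => hw t x) Finset.univ_nonempty
    exact (pos_of_mul_pos_right hZ (by positivity)).ne'

/-- `q(x;t) = w(x;t)/∑_y w(y;t)` is the stationary distribution of
the instantaneous GFMC transition probability, and it has the explicit form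
`q(x;t) = 2^{-N} - Δt E0(x) / (2^N (1 + Δt E_T + N Δt Γ(t)))`. -/
theorem gfmc_stationary_distribution
    (N : ℕ) (hN : 0 < N) (J : Fin N → Fin N → ℝ)
    (Δt ET : ℝ) (hΔt : 0 < Δt)
    (hET : ∀ x : Fin N → Bool, 0 ≤ 1 - Δt * (E0def N J x - ET))
    (Γ : ℕ → ℝ) (hΓpos : ∀ t, 0 < Γ t) (hΓanti : Antitone Γ)
    (hΓlim : Tendsto Γ atTop (nhds 0)) :
    (∀ t : ℕ, (G1mat N J Δt ET Γ t).mulVec (qGFMC N J Δt ET Γ t) = qGFMC N J Δt ET Γ t) ∧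
      ∀ t : ℕ, ∀ x : Fin N → Bool,
        qGFMC N J Δt ET Γ t x =
          ((2 : ℝ) ^ N)⁻¹ -
            Δt * E0def N J x / (2 ^ N * (1 + Δt * ET + N * Δt * Γ t)) :=
  gfmc_stationary_distribution_general N hN J Δt ET hΔt hET Γ hΓpos

end QAPaper
end
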